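/- arXiv:2012.02231 — 2 statements merged into one kernel-verified Lean document; each statement's English description precedes it below -/
import Mathlib

section
/- Let N be a rooted binary phylogenetic network on X with |X| ≥ 3, and let a, b ∈ X be distinct. Then {a, b} is a cherry of N if and only if for every 3-element subset A of X containing a and b, the set {a, b} is a cherry of the trinet N_A exhibited by N on A. -/
open scoped Classical

/-- A directed graph with a finite vertex set and a multiset of arcs
(so that parallel arcs can be represented). -/
structure Digraph' (α : Type*) where
  V : Finset α
  E : Multiset (α × α)

namespace Digraph'

variable {α : Type*} [DecidableEq α]

/-- In-degree of a vertex. -/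
noncomputable def inDeg (G : Digraph' α) (v : α) : ℕ :=
  (G.E.filter (fun e => e.2 = v)).card

/-- Out-degree of a vertex. -/
noncomputable def outDeg (G : Digraph' α) (v : α) : ℕ :=
  (G.E.filter (fun e => e.1 = v)).card

/-- A (directed) path, given as its nonempty list of vertices. -/
def IsPath (G : Digraph' α) (p : List α) : Prop :=
  p ≠ [] ∧ (∀ v ∈ p, v ∈ G.V) ∧ p.Chain' (fun u v => (u, v) ∈ G.E)

/-- A directed path from `u` to `v`. -/
def PathFrom (G : Digraph' α) (u v : α) (p : List α) : Prop :=
  G.IsPath p ∧ p.head? = some u ∧ p.getLast? = some v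

/-- There is a directed path from `u` to `v` (possibly trivial). -/
def Reaches (G : Digraph' α) (u v : α) : Prop := ∃ p, G.PathFrom u v p

/-- Acyclicity: no arc whose head reaches its tail. -/
def Acyclic (G : Digraph' α) : Prop := ∀ e ∈ G.E, ¬ G.Reaches e.2 e.1

/-- `u` is a stable ancestor of `X'` (w.r.t. root `ρ`): every path from
`ρ` to each `x ∈ X'` traverses `u`. -/
def StableAncestor (G : Digraph' α) (ρ : α) (X' : Finset α) (u : α) : Prop :=
  ∀ x ∈ X', ∀ p, G.PathFrom ρ x p → u ∈ p

/-- `u` is a lowest stable ancestor of `X'`: it is a stable ancestor and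
no distinct stable ancestor of `X'` is a descendant of `u`. -/
def IsLowestSA (G : Digraph' α) (ρ : α) (X' : Finset α) (u : α) : Prop :=
  G.StableAncestor ρ X' u ∧
    ∀ v, G.StableAncestor ρ X' v → v ≠ u → ¬ G.Reaches u v

/-- Delete a vertex together with all incident arcs. -/
noncomputable def deleteVertex (G : Digraph' α) (w : α) : Digraph' α :=
  ⟨G.V.erase w, G.E.filter (fun e => e.1 ≠ w ∧ e.2 ≠ w)⟩

/-- `G'` is obtained from `G` by suppressing the in-degree-one
out-degree-one vertex `w` (replacing `(p,w)`, `(w,c)` by the arc `(p,c)`). -/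
def Suppress (G : Digraph' α) (w : α) (G' : Digraph' α) : Prop :=
  G.inDeg w = 1 ∧ G.outDeg w = 1 ∧
  ∃ p c, (p, w) ∈ G.E ∧ (w, c) ∈ G.E ∧
    G'.V = G.V.erase w ∧ G'.E = (G.deleteVertex w).E + {(p, c)}

/-- `G'` is obtained from `G` by deleting exactly one arc of a pair of
parallel arcs. -/
def DeleteParallel (G G' : Digraph' α) : Prop :=
  ∃ e : α × α, 2 ≤ G.E.count e ∧ G'.V = G.V ∧ G'.E = G.E.erase e

/-- One simplification step: suppress a degree-(1,1) vertex or delete a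
parallel arc. -/
def SimpStep (G G' : Digraph' α) : Prop :=
  (∃ w, G.Suppress w G') ∨ G.DeleteParallel G'

/-- `G'` is the full simplification of `G`. -/
def FullSimp (G G' : Digraph' α) : Prop :=
  Relation.ReflTransGen (SimpStep (α := α)) G G' ∧ ∀ G'', ¬ SimpStep G' G''

/-- The path graph of `G` on `A` (w.r.t. the vertex `r`): all vertices and
arcs lying on a directed path from `r` to a leaf in `A`. -/
noncomputable def pathGraph (G : Digraph' α) (r : α) (A : Finset α) : Digraph' α :=
  ⟨G.V.filter (fun v => ∃ x ∈ A, ∃ p, G.PathFrom r x p ∧ v ∈ p),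
   G.E.filter (fun e => ∃ x ∈ A, ∃ p, G.PathFrom r x p ∧ e ∈ p.zip p.tail)⟩

/-- Isomorphism of digraphs fixing every element of `A`. -/
def IsoOn (G1 G2 : Digraph' α) (A : Finset α) : Prop :=
  ∃ φ : α → α, Set.BijOn φ ↑G1.V ↑G2.V ∧ (∀ x ∈ A, φ x = x) ∧
    G2.E = G1.E.map (fun e => (φ e.1, φ e.2))

end Digraph'

/-- A rooted binary phylogenetic network on the leaf set `X`. -/
structure PhyloNet (α : Type*) where
  G : Digraph' α
  root : α
  X : Finset α
  root_mem : root ∈ G.V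
  wf : ∀ e ∈ G.E, e.1 ∈ G.V ∧ e.2 ∈ G.V
  noParallel : ∀ e : α × α, G.E.count e ≤ 1
  acyclic : G.Acyclic
  reach : ∀ v ∈ G.V, G.Reaches root v
  binary :
    (G.V = {root} ∧ G.E = 0 ∧ X = {root}) ∨
    (G.inDeg root = 0 ∧ G.outDeg root = 2 ∧
     (∀ x ∈ X, x ∈ G.V ∧ G.inDeg x = 1 ∧ G.outDeg x = 0) ∧
     (∀ v ∈ G.V, G.outDeg v = 0 → v ∈ X) ∧
     (∀ v ∈ G.V, v ≠ root → v ∉ X →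
       (G.inDeg v = 1 ∧ G.outDeg v = 2) ∨ (G.inDeg v = 2 ∧ G.outDeg v = 1)))

namespace PhyloNet

variable {α : Type*} [DecidableEq α]

/-- `N` is recoverable: the root is the only stable ancestor of `X`. -/
def Recoverable (N : PhyloNet α) : Prop :=
  ∀ v, N.G.StableAncestor N.root N.X v → v = N.root

/-- `{a, b}` is a cherry: two distinct leaves with a common parent. -/
def Cherry (N : PhyloNet α) (a b : α) : Prop :=
  a ∈ N.X ∧ b ∈ N.X ∧ a ≠ b ∧ ∃ p, (p, a) ∈ N.G.E ∧ (p, b) ∈ N.G.E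

/-- `(a, b)` is a reticulated cherry: leaves `a, b` whose parents `p_a, p_b`
satisfy that `(p_a, p_b)` is an arc and `p_b` is a reticulation. -/
def RetCherry (N : PhyloNet α) (a b : α) : Prop :=
  a ∈ N.X ∧ b ∈ N.X ∧ a ≠ b ∧
  ∃ pa pb, (pa, a) ∈ N.G.E ∧ (pb, b) ∈ N.G.E ∧ (pa, pb) ∈ N.G.E ∧
    N.G.inDeg pb = 2

/-- `N'` is obtained from `N` by reducing the leaf `b` of the cherry `{a, b}`:
delete `b` and its incident arc and suppress the resulting degree-two
vertex (or, if the common parent is the root, replace `N` by the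
single-vertex network on `a`). -/
def ReduceCherry (N : PhyloNet α) (a b : α) (N' : PhyloNet α) : Prop :=
  N.Cherry a b ∧ N'.X = N.X.erase b ∧
  ∃ p, (p, a) ∈ N.G.E ∧ (p, b) ∈ N.G.E ∧
    ((p = N.root ∧ N'.G.V = {a} ∧ N'.G.E = 0 ∧ N'.root = a) ∨
     (p ≠ N.root ∧ N'.root = N.root ∧ (N.G.deleteVertex b).Suppress p N'.G))

/-- `N'` is obtained from `N` by cutting the reticulated cherry `(a, b)`:
delete the reticulation arc `(p_a, p_b)` and suppress the two resulting
degree-two vertices. -/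
def CutRetCherry (N : PhyloNet α) (a b : α) (N' : PhyloNet α) : Prop :=
  a ∈ N.X ∧ b ∈ N.X ∧ a ≠ b ∧ N'.X = N.X ∧ N'.root = N.root ∧
  ∃ pa pb, (pa, a) ∈ N.G.E ∧ (pb, b) ∈ N.G.E ∧ (pa, pb) ∈ N.G.E ∧
    N.G.inDeg pb = 2 ∧
    ∃ G1 : Digraph' α, G1.V = N.G.V ∧ G1.E = N.G.E.erase (pa, pb) ∧
      ∃ G2 : Digraph' α, G1.Suppress pa G2 ∧ G2.Suppress pb N'.G

/-- One cherry-picking step: reduce a leaf of a cherry or cut a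
reticulated cherry. -/
def PickStep (N N' : PhyloNet α) : Prop :=
  (∃ a b, N.ReduceCherry a b N') ∨ (∃ a b, N.CutRetCherry a b N')

/-- `N` is an orchard network: some sequence of cherry-picking operations
reduces it to a single vertex. -/
def IsOrchard (N : PhyloNet α) : Prop :=
  ∃ M : PhyloNet α, Relation.ReflTransGen (PickStep (α := α)) N M ∧ M.G.V.card = 1

/-- `H` is the network exhibited by `N` on `A`: the full simplification of
the path graph of `N` on `A`, rooted at the lowest stable ancestor of `A`. -/
def Exhibits (N : PhyloNet α) (A : Finset α) (H : Digraph' α) : Prop :=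
  ∃ r, N.G.IsLowestSA N.root A r ∧ Digraph'.FullSimp (N.G.pathGraph r A) H

end PhyloNet

/-!
If `{a, b}` is a cherry with parent `q`, then `q` lies below the lowest stable ancestor of any
`A ∋ a, b`, so both arcs `(q, a)` and `(q, b)` belong to the path graph. Simplification never
suppresses `q` (out-degree at least two) or the sinks `a` and `b`, and deleting one copy of a
doubled arc leaves the arc in place, so the cherry survives into `N_A`.

Conversely, if `{a, b}` is not a cherry, then for one of the two leaves, say `a`, there is a path
`u → v₁ → ⋯ → vₖ → a` in which `u` has out-degree two, every `vᵢ` is a reticulation, and the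
other child `s` of `u` reaches neither `v₁` (`a` if `k = 0`) nor, if `k = 0`, `b`. It is found by
climbing from the parent of `a` through reticulations; acyclicity guarantees that one of the two
parents of a reticulation has an other child that avoids it. For `A = {a, b, c}` with `c` a leaf
below `s`, this configuration lies in the path graph of `A`, and degree counting shows that it
survives every simplification step. In the trinet the parent of `a` is then either `vₖ`, whose
only child is `a`, or `u`, whose other child is not `b`.
-/

theorem Multiset.count_add_count_le_card {β : Type*} [DecidableEq β] {e f : β} (h : e ≠ f)
    (s : Multiset β) : s.count e + s.count f ≤ Multiset.card s := by
  induction s using Multiset.induction_on with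
  | empty => simp
  | cons a t ih =>
    rw [Multiset.count_cons, Multiset.count_cons, Multiset.card_cons]
    split_ifs with h1 h2 <;> grind

namespace List

variable {β : Type*} {R : β → β → Prop}

theorem IsChain.exists_rel_left_of_mem {x y : β} {l : List β} (h : (x :: l).IsChain R)
    (hy : y ∈ l) : ∃ z ∈ x :: l, R z y := by
  induction l generalizing x with
  | nil => simp at hy
  | cons y' l ih =>
    rcases mem_cons.1 hy with rfl | hy
    · exact ⟨x, mem_cons_self, (isChain_cons_cons.1 h).1⟩
    · obtain ⟨z, hz, hzy⟩ := ih h.tail hy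
      exact ⟨z, mem_cons_of_mem _ hz, hzy⟩

theorem IsChain.exists_rel_right_of_mem {x b : β} {l : List β} (h : (l ++ [b]).IsChain R)
    (hx : x ∈ l) : ∃ z ∈ l.tail ++ [b], R x z := by
  induction l with
  | nil => simp at hx
  | cons y l ih =>
    rcases mem_cons.1 hx with rfl | hx
    · exact ⟨_, head_mem (by simp), h.rel_head? (head_mem_head? _)⟩
    · obtain ⟨z, hz, hxz⟩ := ih h.tail hx
      refine ⟨z, ?_, hxz⟩
      rcases mem_append.1 hz with hz | hz
      exacts [mem_append_left _ (mem_of_mem_tail hz), mem_append_right _ hz]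

theorem mem_zip_tail_of_append (l₁ l₂ : List β) (x y : β) :
    (x, y) ∈ (l₁ ++ x :: y :: l₂).zip (l₁ ++ x :: y :: l₂).tail := by
  induction l₁ with
  | nil => simp
  | cons z l ih =>
    obtain ⟨r, rs, hr⟩ : ∃ r rs, l ++ x :: y :: l₂ = r :: rs := by cases l <;> simp
    rw [hr] at ih
    simp only [cons_append, hr, tail_cons, zip_cons_cons, mem_cons]
    exact Or.inr (by simpa using ih)

end List

namespace Digraph'

section Reachability

variable {α : Type*} {G : Digraph' α} {A : Finset α} {p q : List α} {r u v w x y : α}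

theorem reaches_iff : G.Reaches u v ↔
    u ∈ G.V ∧ Relation.ReflTransGen (fun x y => (x, y) ∈ G.E ∧ y ∈ G.V) u v := by
  constructor
  · rintro ⟨_ | ⟨u', l⟩, ⟨hne, hV, hch⟩, hh, hl⟩
    · exact absurd rfl hne
    · obtain rfl : u' = u := by simpa using hh
      refine ⟨hV _ List.mem_cons_self, List.relationReflTransGen_of_exists_isChain_cons l
        (hch.imp_of_mem_tail_imp fun a b _ hb hab => ⟨hab, hV b (List.mem_of_mem_tail hb)⟩) ?_⟩
      rw [List.getLast?_eq_some_getLast (List.cons_ne_nil _ _)] at hl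
      exact Option.some.inj hl
  · rintro ⟨hu, h⟩
    obtain ⟨l, hch, hl⟩ := List.exists_isChain_cons_of_relationReflTransGen h
    refine ⟨u :: l, ⟨List.cons_ne_nil _ _, fun z hz => ?_, hch.imp fun _ _ h => h.1⟩, rfl, ?_⟩
    · rcases List.mem_cons.1 hz with rfl | hz
      · exact hu
      · exact hch.cons_induction (· ∈ G.V) l (fun _ _ h _ => h.2) hu z hz
    · rw [List.getLast?_eq_some_getLast (List.cons_ne_nil _ _), hl]

theorem Reaches.refl (h : v ∈ G.V) : G.Reaches v v :=
  reaches_iff.2 ⟨h, .refl⟩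

theorem Reaches.trans (h₁ : G.Reaches u v) (h₂ : G.Reaches v w) : G.Reaches u w :=
  reaches_iff.2 ⟨(reaches_iff.1 h₁).1, (reaches_iff.1 h₁).2.trans (reaches_iff.1 h₂).2⟩

theorem Reaches.mem_left (h : G.Reaches u v) : u ∈ G.V :=
  (reaches_iff.1 h).1

theorem Reaches.mem_right (h : G.Reaches u v) : v ∈ G.V := by
  obtain ⟨hu, h⟩ := reaches_iff.1 h
  rcases h.cases_tail with rfl | ⟨_, _, _, hv⟩
  exacts [hu, hv]

theorem reaches_of_mem_E (h : (x, y) ∈ G.E) (hx : x ∈ G.V) (hy : y ∈ G.V) : G.Reaches x y :=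
  reaches_iff.2 ⟨hx, .single ⟨h, hy⟩⟩

theorem Reaches.exists_last_arc (h : G.Reaches u v) (hne : u ≠ v) :
    ∃ y, (y, v) ∈ G.E ∧ G.Reaches u y := by
  obtain ⟨hu, h⟩ := reaches_iff.1 h
  rcases h.cases_tail with rfl | ⟨y, huy, hyv, -⟩
  · exact absurd rfl hne
  · exact ⟨y, hyv, reaches_iff.2 ⟨hu, huy⟩⟩

theorem Reaches.mem_of_closed {S : α → Prop} (hS : ∀ x y, S x → (x, y) ∈ G.E → S y)
    (h : G.Reaches u v) (hu : S u) : S v := by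
  obtain ⟨-, hr⟩ := reaches_iff.1 h
  clear h
  induction hr with
  | refl => exact hu
  | tail _ hyz ih => exact hS _ _ ih hyz.1

theorem Acyclic.eq_of_reaches (hG : G.Acyclic) (h₁ : G.Reaches u v) (h₂ : G.Reaches v u) :
    u = v := by
  by_contra hne
  obtain ⟨y, hyv, huy⟩ := h₁.exists_last_arc hne
  exact hG _ hyv (h₂.trans huy)

theorem Acyclic.wellFounded_descendant (hG : G.Acyclic) :
    WellFounded fun y x => G.Reaches x y ∧ x ≠ y := by
  refine (measure fun x => (G.V.filter (G.Reaches x ·)).card).wf.mono fun y x ⟨hxy, hne⟩ => ?_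
  refine Finset.card_lt_card ((Finset.ssubset_iff_of_subset fun z hz => ?_).2 ⟨x, ?_, ?_⟩)
  · simp only [Finset.mem_filter] at hz ⊢
    exact ⟨hz.1, hxy.trans hz.2⟩
  · exact Finset.mem_filter.2 ⟨hxy.mem_left, .refl hxy.mem_left⟩
  · exact fun hyx => hne (hG.eq_of_reaches hxy (Finset.mem_filter.1 hyx).2)

theorem Acyclic.wellFounded_ancestor (hG : G.Acyclic) :
    WellFounded fun x y => G.Reaches x y ∧ x ≠ y := by
  refine (measure fun y => (G.V.filter (G.Reaches · y)).card).wf.mono fun x y ⟨hxy, hne⟩ => ?_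
  refine Finset.card_lt_card ((Finset.ssubset_iff_of_subset fun z hz => ?_).2 ⟨y, ?_, ?_⟩)
  · simp only [Finset.mem_filter] at hz ⊢
    exact ⟨hz.1, hz.2.trans hxy⟩
  · exact Finset.mem_filter.2 ⟨hxy.mem_right, .refl hxy.mem_right⟩
  · exact fun hyx => hne (hG.eq_of_reaches hxy (Finset.mem_filter.1 hyx).2)

theorem Acyclic.exists_isLowestSA (hG : G.Acyclic) (ρ : α) (A : Finset α) :
    ∃ r, G.IsLowestSA ρ A r := by
  obtain ⟨r, hr, hmin⟩ := hG.wellFounded_descendant.has_min {v | G.StableAncestor ρ A v}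
    ⟨ρ, fun _ _ p hp => List.mem_of_mem_head? hp.2.1⟩
  exact ⟨r, hr, fun v hv hne hrv => hmin v hv ⟨hrv, hne.symm⟩⟩

theorem PathFrom.append (h₁ : G.PathFrom u v p) (h₂ : G.PathFrom v w q) :
    G.PathFrom u w (p ++ q.tail) := by
  obtain ⟨⟨hp, hpV, hpC⟩, hph, hpl⟩ := h₁
  obtain ⟨⟨-, hqV, hqC⟩, hqh, hql⟩ := h₂
  obtain ⟨q', rfl⟩ : ∃ q', q = v :: q' := ⟨q.tail, by cases q <;> simp_all⟩
  refine ⟨⟨by simp [hp], ?_, hpC.append hqC.tail ?_⟩, ?_, ?_⟩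
  · simp only [List.mem_append, List.tail_cons]
    rintro z (hz | hz)
    exacts [hpV z hz, hqV z (List.mem_cons_of_mem _ hz)]
  · rw [hpl]
    rintro _ ⟨⟩ y hy
    exact hqC.rel_head? hy
  · rw [List.head?_append_of_ne_nil _ hp, hph]
  · cases q' with
    | nil => simpa using hpl.trans hql
    | cons y q'' =>
      rw [List.tail_cons, List.getLast?_append_of_ne_nil _ (List.cons_ne_nil _ _), ← hql,
        List.getLast?_cons_cons]

theorem PathFrom.exists_suffix (h : G.PathFrom u x p) (hv : v ∈ p) :
    ∃ q, G.PathFrom v x q ∧ ∀ z ∈ q, z ∈ p := by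
  obtain ⟨⟨-, hV, hC⟩, -, hl⟩ := h
  obtain ⟨s, t, rfl⟩ := List.append_of_mem hv
  refine ⟨v :: t, ⟨⟨List.cons_ne_nil _ _, fun z hz => hV z (by simp_all), ?_⟩, rfl, ?_⟩,
    fun z hz => by simp_all⟩
  · exact hC.suffix (List.suffix_append _ _)
  · rwa [List.getLast?_append_of_ne_nil _ (List.cons_ne_nil _ _)] at hl

theorem PathFrom.reaches_of_mem (h : G.PathFrom u x p) (hv : v ∈ p) : G.Reaches v x :=
  let ⟨q, hq, _⟩ := h.exists_suffix hv
  ⟨q, hq⟩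

theorem mem_pathGraph_E (hru : G.Reaches r u) (huv : (u, v) ∈ G.E) (hvx : G.Reaches v x)
    (hx : x ∈ A) : (u, v) ∈ (G.pathGraph r A).E := by
  have hpair : G.PathFrom u v [u, v] :=
    ⟨⟨by simp, by simp [hru.mem_right, hvx.mem_left], List.isChain_pair.2 huv⟩, rfl, rfl⟩
  obtain ⟨p, hp⟩ := hru
  obtain ⟨q, hq⟩ := hvx
  have hpath := (hp.append hpair).append hq
  obtain ⟨p', rfl⟩ := List.getLast?_eq_some_iff.1 hp.2.2
  refine Multiset.mem_filter.2 ⟨huv, x, hx, _, hpath, ?_⟩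
  simpa using List.mem_zip_tail_of_append p' q.tail u v

theorem pathGraph_E_le : (G.pathGraph r A).E ≤ G.E :=
  Multiset.filter_le _ _

/-- The invariant relating a simplification `G` of a subgraph of `K` to `K`; it excludes loops,
so that every simplification step removes an arc. -/
def ArcsDescend (K G : Digraph' α) : Prop :=
  ∀ e ∈ G.E, e.1 ≠ e.2 ∧ K.Reaches e.1 e.2

end Reachability

section Degrees

variable {α : Type*} [DecidableEq α] {G : Digraph' α} {A : Finset α} {r u v x y z : α}

theorem count_add_count_le_inDeg (hxy : x ≠ y) :
    G.E.count (x, v) + G.E.count (y, v) ≤ G.inDeg v := by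
  rw [← Multiset.count_filter_of_pos (p := (·.2 = v)) rfl,
    ← Multiset.count_filter_of_pos (p := (·.2 = v)) (a := (y, v)) rfl]
  exact Multiset.count_add_count_le_card (by simpa using hxy) _

theorem count_add_count_le_outDeg (hxy : x ≠ y) :
    G.E.count (u, x) + G.E.count (u, y) ≤ G.outDeg u := by
  rw [← Multiset.count_filter_of_pos (p := (·.1 = u)) rfl,
    ← Multiset.count_filter_of_pos (p := (·.1 = u)) (a := (u, y)) rfl]
  exact Multiset.count_add_count_le_card (by simpa using hxy) _

theorem count_le_inDeg (x v : α) : G.E.count (x, v) ≤ G.inDeg v :=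
  (Multiset.count_filter_of_pos (p := (·.2 = v)) rfl).symm.le.trans (Multiset.count_le_card _ _)

theorem count_le_outDeg (u x : α) : G.E.count (u, x) ≤ G.outDeg u :=
  (Multiset.count_filter_of_pos (p := (·.1 = u)) rfl).symm.le.trans (Multiset.count_le_card _ _)

theorem one_le_inDeg (h : (x, v) ∈ G.E) : 1 ≤ G.inDeg v :=
  (Multiset.count_pos.2 h).trans_le (count_le_inDeg x v)

theorem one_le_outDeg (h : (u, x) ∈ G.E) : 1 ≤ G.outDeg u :=
  (Multiset.count_pos.2 h).trans_le (count_le_outDeg u x)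

theorem two_le_inDeg (hx : (x, v) ∈ G.E) (hy : (y, v) ∈ G.E) (hxy : x ≠ y) : 2 ≤ G.inDeg v := by
  have := count_add_count_le_inDeg (G := G) (v := v) hxy
  have := Multiset.count_pos.2 hx
  have := Multiset.count_pos.2 hy
  omega

theorem two_le_outDeg (hx : (u, x) ∈ G.E) (hy : (u, y) ∈ G.E) (hxy : x ≠ y) :
    2 ≤ G.outDeg u := by
  have := count_add_count_le_outDeg (G := G) (u := u) hxy
  have := Multiset.count_pos.2 hx
  have := Multiset.count_pos.2 hy
  omega

theorem not_mem_of_outDeg_eq_zero (h : G.outDeg u = 0) : (u, x) ∉ G.E :=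
  fun hx => by have := one_le_outDeg hx; omega

theorem eq_of_inDeg_eq_one (h : G.inDeg v = 1) (hx : (x, v) ∈ G.E) (hy : (y, v) ∈ G.E) :
    x = y := by
  by_contra hxy
  have := two_le_inDeg hx hy hxy
  omega

theorem eq_of_outDeg_eq_one (h : G.outDeg u = 1) (hx : (u, x) ∈ G.E) (hy : (u, y) ∈ G.E) :
    x = y := by
  by_contra hxy
  have := two_le_outDeg hx hy hxy
  omega

theorem eq_or_eq_of_inDeg_eq_two (h : G.inDeg v = 2) (hx : (x, v) ∈ G.E)
    (hy : (y, v) ∈ G.E) (hz : (z, v) ∈ G.E) (hxy : x ≠ y) : z = x ∨ z = y := by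
  obtain ⟨e, f, hef⟩ := Multiset.card_eq_two.1 h
  have mem : ∀ t, (t, v) ∈ G.E → t = e.1 ∨ t = f.1 := fun t ht => by
    have : (t, v) ∈ G.E.filter (·.2 = v) := Multiset.mem_filter.2 ⟨ht, rfl⟩
    rw [hef] at this
    simp only [Multiset.insert_eq_cons, Multiset.mem_cons, Multiset.mem_singleton] at this
    rcases this with h | h <;> simp [← h]
  grind

theorem eq_or_eq_of_outDeg_eq_two (h : G.outDeg u = 2) (hx : (u, x) ∈ G.E)
    (hy : (u, y) ∈ G.E) (hz : (u, z) ∈ G.E) (hxy : x ≠ y) : z = x ∨ z = y := by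
  obtain ⟨e, f, hef⟩ := Multiset.card_eq_two.1 h
  have mem : ∀ t, (u, t) ∈ G.E → t = e.2 ∨ t = f.2 := fun t ht => by
    have : (u, t) ∈ G.E.filter (·.1 = u) := Multiset.mem_filter.2 ⟨ht, rfl⟩
    rw [hef] at this
    simp only [Multiset.insert_eq_cons, Multiset.mem_cons, Multiset.mem_singleton] at this
    rcases this with h | h <;> simp [← h]
  grind

theorem exists_mem_E_of_inDeg_ne_zero (h : G.inDeg v ≠ 0) : ∃ x, (x, v) ∈ G.E := by
  obtain ⟨e, he⟩ := Multiset.card_pos_iff_exists_mem.1 (Nat.pos_of_ne_zero h)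
  obtain ⟨he, hv⟩ := Multiset.mem_filter.1 he
  exact ⟨e.1, hv ▸ he⟩

theorem exists_mem_E_of_outDeg_ne_zero (h : G.outDeg u ≠ 0) : ∃ x, (u, x) ∈ G.E := by
  obtain ⟨e, he⟩ := Multiset.card_pos_iff_exists_mem.1 (Nat.pos_of_ne_zero h)
  obtain ⟨he, hu⟩ := Multiset.mem_filter.1 he
  exact ⟨e.2, hu ▸ he⟩

theorem exists_ne_mem_E_of_inDeg_eq_two (h : G.inDeg v = 2) (hc : G.E.count (x, v) ≤ 1) :
    ∃ y, (y, v) ∈ G.E ∧ y ≠ x := by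
  by_contra! hall
  have : G.E.filter (·.2 = v) = G.E.filter ((x, v) = ·) := Multiset.filter_congr fun e he => by
    obtain ⟨e1, e2⟩ := e
    constructor
    · rintro rfl
      rw [hall e1 he]
    · rintro ⟨⟩
      rfl
  have : G.inDeg v = G.E.count (x, v) := by
    rw [Multiset.count_eq_card_filter_eq, ← this]
    rfl
  omega

theorem exists_ne_mem_E_of_outDeg_eq_two (h : G.outDeg u = 2) (hc : G.E.count (u, x) ≤ 1) :
    ∃ y, (u, y) ∈ G.E ∧ y ≠ x := by
  by_contra! hall
  have : G.E.filter (·.1 = u) = G.E.filter ((u, x) = ·) := Multiset.filter_congr fun e he => by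
    obtain ⟨e1, e2⟩ := e
    constructor
    · rintro rfl
      rw [hall e2 he]
    · rintro ⟨⟩
      rfl
  have : G.outDeg u = G.E.count (u, x) := by
    rw [Multiset.count_eq_card_filter_eq, ← this]
    rfl
  omega

theorem Reaches.eq_of_outDeg_eq_zero (h : G.Reaches u v) (h0 : G.outDeg u = 0) :
    v = u :=
  h.mem_of_closed (S := (· = u))
    (fun _ _ hx hxy => absurd (hx ▸ hxy) (not_mem_of_outDeg_eq_zero h0)) rfl

theorem Reaches.reaches_parent (h : G.Reaches u v) (huv : u ≠ v) (hv : G.inDeg v = 1)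
    (hxv : (x, v) ∈ G.E) : G.Reaches u x := by
  obtain ⟨y, hyv, huy⟩ := h.exists_last_arc huv
  rwa [eq_of_inDeg_eq_one hv hyv hxv] at huy

theorem inDeg_pathGraph_le : (G.pathGraph r A).inDeg v ≤ G.inDeg v :=
  Multiset.card_le_card (Multiset.filter_le_filter _ pathGraph_E_le)

theorem outDeg_pathGraph_le : (G.pathGraph r A).outDeg v ≤ G.outDeg v :=
  Multiset.card_le_card (Multiset.filter_le_filter _ pathGraph_E_le)

end Degrees

section Simplification

variable {α : Type*} [DecidableEq α] {G G' H K : Digraph' α} {e : α × α} {a b c p v w x y : α}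

theorem filter_fst_eq_singleton (h : G.outDeg w = 1) (hwc : (w, c) ∈ G.E) :
    G.E.filter (·.1 = w) = {(w, c)} := by
  obtain ⟨f, hf⟩ := Multiset.card_eq_one.1 h
  have : (w, c) ∈ G.E.filter (·.1 = w) := Multiset.mem_filter.2 ⟨hwc, rfl⟩
  rw [hf, Multiset.mem_singleton] at this
  rw [hf, this]

theorem filter_snd_eq_singleton (h : G.inDeg w = 1) (hpw : (p, w) ∈ G.E) :
    G.E.filter (·.2 = w) = {(p, w)} := by
  obtain ⟨f, hf⟩ := Multiset.card_eq_one.1 h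
  have : (p, w) ∈ G.E.filter (·.2 = w) := Multiset.mem_filter.2 ⟨hpw, rfl⟩
  rw [hf, Multiset.mem_singleton] at this
  rw [hf, this]

section Suppress

variable (hE : G'.E = (G.deleteVertex w).E + {(p, c)})
include hE

theorem inDeg_suppress (hw : G.outDeg w = 1) (hwc : (w, c) ∈ G.E) (hv : v ≠ w) :
    G'.inDeg v = G.inDeg v := by
  have hdel :
      (G.deleteVertex w).E.filter (·.2 = v) = (G.E.filter (¬ ·.1 = w)).filter (·.2 = v) := by
    simp only [deleteVertex, Multiset.filter_filter]
    exact Multiset.filter_congr fun f _ => by grind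
  unfold inDeg
  conv_rhs => rw [← Multiset.filter_add_not (·.1 = w) G.E, filter_fst_eq_singleton hw hwc]
  rw [hE, Multiset.filter_add, Multiset.filter_add, hdel, Multiset.card_add, Multiset.card_add,
    add_comm]
  simp only [Multiset.filter_singleton]
  split_ifs <;> rfl

theorem outDeg_suppress (hw : G.inDeg w = 1) (hpw : (p, w) ∈ G.E) (hv : v ≠ w) :
    G'.outDeg v = G.outDeg v := by
  have hdel :
      (G.deleteVertex w).E.filter (·.1 = v) = (G.E.filter (¬ ·.2 = w)).filter (·.1 = v) := by
    simp only [deleteVertex, Multiset.filter_filter]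
    exact Multiset.filter_congr fun f _ => by grind
  unfold outDeg
  conv_rhs => rw [← Multiset.filter_add_not (·.2 = w) G.E, filter_snd_eq_singleton hw hpw]
  rw [hE, Multiset.filter_add, Multiset.filter_add, hdel, Multiset.card_add, Multiset.card_add,
    add_comm]
  simp only [Multiset.filter_singleton]
  split_ifs <;> rfl

theorem mem_E_suppress (hf : (x, y) ∈ G.E) (hx : x ≠ w) (hy : y ≠ w) : (x, y) ∈ G'.E := by
  rw [hE]
  exact Multiset.mem_add.2 (Or.inl (Multiset.mem_filter.2 ⟨hf, hx, hy⟩))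

theorem bypass_mem_E_suppress : (p, c) ∈ G'.E := by
  rw [hE]
  exact Multiset.mem_add.2 (Or.inr (Multiset.mem_singleton_self _))

theorem mem_E_suppress_cases (hf : e ∈ G'.E) : e ∈ G.E ∨ e = (p, c) := by
  rw [hE] at hf
  rcases Multiset.mem_add.1 hf with hf | hf
  exacts [Or.inl (Multiset.mem_of_mem_filter hf), Or.inr (Multiset.mem_singleton.1 hf)]

theorem card_E_suppress_lt (hpw : (p, w) ∈ G.E) (hwc : (w, c) ∈ G.E) (hp : p ≠ w) :
    Multiset.card G'.E < Multiset.card G.E := by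
  have hinc := Multiset.count_add_count_le_card (s := G.E.filter fun f => ¬ (f.1 ≠ w ∧ f.2 ≠ w))
    (e := (p, w)) (f := (w, c)) (by simp [hp])
  have h1 := Multiset.count_pos.2 (Multiset.mem_filter.2 ⟨hpw, by simp⟩ :
    (p, w) ∈ G.E.filter fun f => ¬ (f.1 ≠ w ∧ f.2 ≠ w))
  have h2 := Multiset.count_pos.2 (Multiset.mem_filter.2 ⟨hwc, by simp⟩ :
    (w, c) ∈ G.E.filter fun f => ¬ (f.1 ≠ w ∧ f.2 ≠ w))
  have hsplit := congrArg Multiset.card (Multiset.filter_add_not (fun f => f.1 ≠ w ∧ f.2 ≠ w) G.E)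
  rw [Multiset.card_add] at hsplit
  rw [hE, Multiset.card_add, Multiset.card_singleton]
  simp only [deleteVertex]
  omega

end Suppress

section DeleteParallel

variable (hE : G'.E = G.E.erase e)
include hE

theorem mem_E_deleteParallel_iff (he : 2 ≤ G.E.count e) {f : α × α} : f ∈ G'.E ↔ f ∈ G.E := by
  rw [hE]
  by_cases hf : f = e
  · subst hf
    rw [← Multiset.count_pos, ← Multiset.count_pos, Multiset.count_erase_self]
    omega
  · exact Multiset.mem_erase_of_ne hf

theorem inDeg_deleteParallel (he : e ∈ G.E) (hv : e.2 ≠ v) : G'.inDeg v = G.inDeg v := by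
  rw [inDeg, inDeg, hE]
  conv_rhs => rw [← Multiset.cons_erase he]
  rw [Multiset.filter_cons_of_neg]
  exact hv

theorem outDeg_deleteParallel (he : e ∈ G.E) (hv : e.1 ≠ v) : G'.outDeg v = G.outDeg v := by
  rw [outDeg, outDeg, hE]
  conv_rhs => rw [← Multiset.cons_erase he]
  rw [Multiset.filter_cons_of_neg]
  exact hv

theorem card_E_deleteParallel_lt (he : e ∈ G.E) : Multiset.card G'.E < Multiset.card G.E := by
  rw [hE, Multiset.card_erase_of_mem he]
  exact Nat.pred_lt (Multiset.card_pos_iff_exists_mem.2 ⟨e, he⟩).ne'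

end DeleteParallel

theorem ArcsDescend.simpStep (hK : K.Acyclic) (h : ArcsDescend K G) (hs : SimpStep G G') :
    ArcsDescend K G' ∧ Multiset.card G'.E < Multiset.card G.E := by
  rcases hs with ⟨w, -, -, p, c, hpw, hwc, -, hE⟩ | ⟨e, he, -, hE⟩
  · refine ⟨fun f hf => ?_, card_E_suppress_lt hE hpw hwc (h _ hpw).1⟩
    rcases mem_E_suppress_cases hE hf with hf | rfl
    · exact h f hf
    · refine ⟨fun hpc => (h _ hwc).1 (hK.eq_of_reaches (h _ hwc).2 ?_),
        (h _ hpw).2.trans (h _ hwc).2⟩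
      exact hpc ▸ (h _ hpw).2
  · have hmem : e ∈ G.E := Multiset.count_pos.1 (by omega)
    exact ⟨fun f hf => h f ((mem_E_deleteParallel_iff hE he).1 hf),
      card_E_deleteParallel_lt hE hmem⟩

theorem exists_fullSimp {P : Digraph' α → Prop}
    (hP : ∀ G G', P G → SimpStep G G' → P G' ∧ Multiset.card G'.E < Multiset.card G.E)
    (G : Digraph' α) (hG : P G) : ∃ H, FullSimp G H ∧ P H := by
  by_cases h : ∃ G', SimpStep G G'
  · obtain ⟨G', hs⟩ := h
    obtain ⟨hG', hlt⟩ := hP G G' hG hs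
    obtain ⟨H, ⟨hG'H, hH⟩, hPH⟩ := exists_fullSimp hP G' hG'
    exact ⟨H, ⟨.head hs hG'H, hH⟩, hPH⟩
  · simp only [not_exists] at h
    exact ⟨G, ⟨.refl, h⟩, hG⟩
termination_by Multiset.card G.E

def IsCherry (G : Digraph' α) (a b : α) : Prop :=
  G.outDeg a = 0 ∧ G.outDeg b = 0 ∧ ∃ q, (q, a) ∈ G.E ∧ (q, b) ∈ G.E

theorem IsCherry.simpStep (hab : a ≠ b) (h : G.IsCherry a b) (hs : SimpStep G G') :
    G'.IsCherry a b := by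
  obtain ⟨ha, hb, q, hqa, hqb⟩ := h
  rcases hs with ⟨w, hin, hout, p, c, hpw, hwc, -, hE⟩ | ⟨e, he, -, hE⟩
  · have hne : ∀ x, G.outDeg x ≠ 1 → x ≠ w := fun x hx hxw => hx (hxw ▸ hout)
    have hqw : q ≠ w := hne q (by have := two_le_outDeg hqa hqb hab; omega)
    have haw : a ≠ w := hne a (by omega)
    have hbw : b ≠ w := hne b (by omega)
    exact ⟨(outDeg_suppress hE hin hpw haw).trans ha, (outDeg_suppress hE hin hpw hbw).trans hb,
      q, mem_E_suppress hE hqa hqw haw, mem_E_suppress hE hqb hqw hbw⟩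
  · have hmem : e ∈ G.E := Multiset.count_pos.1 (by omega)
    have hsrc : ∀ x, G.outDeg x = 0 → e.1 ≠ x := fun x hx hex =>
      not_mem_of_outDeg_eq_zero hx (x := e.2) (by rw [← hex]; exact hmem)
    exact ⟨(outDeg_deleteParallel hE hmem (hsrc a ha)).trans ha,
      (outDeg_deleteParallel hE hmem (hsrc b hb)).trans hb,
      q, (mem_E_deleteParallel_iff hE he).2 hqa, (mem_E_deleteParallel_iff hE he).2 hqb⟩

theorem IsCherry.fullSimp (hab : a ≠ b) (h : G.IsCherry a b) (hH : FullSimp G H) :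
    H.IsCherry a b := by
  obtain ⟨hGH, -⟩ := hH
  induction hGH with
  | refl => exact h
  | tail _ hs ih => exact ih.simpStep hab hs

end Simplification

variable {α : Type*} [DecidableEq α] {G G' K : Digraph' α} {a b u s : α} {L : List α}

/-- A witness that `{a, b}` is not a cherry of `G`: a vertex `u` of out-degree two, a path
`u → L → a` whose inner vertices have in-degree two and out-degree one, and a second child `s`
of `u` from which neither the path nor, when `L` is empty, `b` can be reached in the network `K`
that `G` was simplified from. -/
structure CherryObstruction (K G : Digraph' α) (a b u s : α) (L : List α) : Prop where
  chain : (u :: (L ++ [a])).IsChain fun x y => (x, y) ∈ G.E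
  inDeg_leaf : G.inDeg a = 1
  outDeg_leaf : G.outDeg a = 0
  reticulate : ∀ v ∈ L, G.inDeg v = 2 ∧ G.outDeg v = 1
  outDeg_top : G.outDeg u = 2
  side : (u, s) ∈ G.E
  not_reaches_head : ¬ K.Reaches s (L.headD a)
  not_reaches_of_nil : L = [] → ¬ K.Reaches s b

namespace CherryObstruction

variable (h : CherryObstruction K G a b u s L)
include h

theorem top_mem_E : (u, L.headD a) ∈ G.E :=
  h.chain.rel_head? (by cases L <;> simp)

theorem last_mem_E : ((u :: L).getLast (List.cons_ne_nil _ _), a) ∈ G.E :=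
  h.chain.rel_getLast_head_of_append (l₁ := u :: L) (l₂ := [a]) (List.cons_ne_nil _ _)
    (List.cons_ne_nil _ _)

theorem exists_pred {v : α} (hv : v ∈ L) : ∃ p ∈ u :: L, (p, v) ∈ G.E := by
  obtain ⟨p, hp, hpv⟩ := h.chain.exists_rel_left_of_mem (List.mem_append_left _ hv)
  refine ⟨p, ?_, hpv⟩
  rcases List.mem_cons.1 hp with rfl | hp
  · exact List.mem_cons_self
  rcases List.mem_append.1 hp with hp | hp
  · exact List.mem_cons_of_mem _ hp
  · obtain rfl := List.mem_singleton.1 hp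
    exact absurd hpv (not_mem_of_outDeg_eq_zero h.outDeg_leaf)

theorem exists_succ {v : α} (hv : v ∈ L) : ∃ y ∈ L ++ [a], (v, y) ∈ G.E := by
  obtain ⟨y, hy, hvy⟩ := (h.chain : ((u :: L) ++ [a]).IsChain _).exists_rel_right_of_mem
    (List.mem_cons_of_mem _ hv)
  exact ⟨y, hy, hvy⟩

theorem side_ne_head (hG : ArcsDescend K G) : s ≠ L.headD a := by
  rintro rfl
  exact h.not_reaches_head (.refl (hG _ h.top_mem_E).2.mem_right)

theorem mem_of_reaches {x y : α} (hx : x ∈ L ∨ x = a) (hxy : G.Reaches x y) :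
    y ∈ L ∨ y = a := by
  refine hxy.mem_of_closed (S := fun x => x ∈ L ∨ x = a) (fun x z hx hxz => ?_) hx
  rcases hx with hx | rfl
  · obtain ⟨y, hy, hxy⟩ := h.exists_succ hx
    rw [eq_of_outDeg_eq_one (h.reticulate x hx).2 hxz hxy]
    simpa using hy
  · exact absurd hxz (not_mem_of_outDeg_eq_zero h.outDeg_leaf)

theorem suppress {w p c : α} (hG : ArcsDescend K G) (hin : G.inDeg w = 1)
    (hout : G.outDeg w = 1) (hpw : (p, w) ∈ G.E) (hwc : (w, c) ∈ G.E)
    (hE : G'.E = (G.deleteVertex w).E + {(p, c)}) : ∃ s', CherryObstruction K G' a b u s' L := by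
  have hw : ∀ x ∈ u :: (L ++ [a]), x ≠ w := by
    rintro x hx rfl
    rcases List.mem_cons.1 hx with rfl | hx
    · exact absurd (h.outDeg_top.symm.trans hout) (by decide)
    rcases List.mem_append.1 hx with hx | hx
    · exact absurd ((h.reticulate x hx).1.symm.trans hin) (by decide)
    · obtain rfl := List.mem_singleton.1 hx
      exact absurd (h.outDeg_leaf.symm.trans hout) (by decide)
  have hu := hw u List.mem_cons_self
  have ha := hw a (by simp)
  have hL : ∀ v ∈ L, v ≠ w := fun v hv => hw v (by simp [hv])
  have hside : ∃ s', (u, s') ∈ G'.E ∧ ¬ K.Reaches s' (L.headD a) ∧ (L = [] → ¬ K.Reaches s' b) := by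
    by_cases hsw : s = w
    · subst hsw
      obtain rfl := eq_of_inDeg_eq_one hin hpw h.side
      have hsc := (hG _ hwc).2
      exact ⟨c, bypass_mem_E_suppress hE, fun hc => h.not_reaches_head (hsc.trans hc),
        fun hL hc => h.not_reaches_of_nil hL (hsc.trans hc)⟩
    · exact ⟨s, mem_E_suppress hE h.side hu hsw, h.not_reaches_head, h.not_reaches_of_nil⟩
  obtain ⟨s', hs', hhead, hnil⟩ := hside
  exact ⟨s', ⟨h.chain.imp_of_mem_imp fun x y hx hy hxy => mem_E_suppress hE hxy (hw x hx) (hw y hy),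
    (inDeg_suppress hE hout hwc ha).trans h.inDeg_leaf,
    (outDeg_suppress hE hin hpw ha).trans h.outDeg_leaf,
    fun v hv => ⟨(inDeg_suppress hE hout hwc (hL v hv)).trans (h.reticulate v hv).1,
      (outDeg_suppress hE hin hpw (hL v hv)).trans (h.reticulate v hv).2⟩,
    (outDeg_suppress hE hin hpw hu).trans h.outDeg_top, hs', hhead, hnil⟩⟩

/-- A doubled arc can neither leave nor enter the path `u → L → a`: the degrees along it leave
no room for a second copy of an arc. -/
theorem deleteParallel {x y : α} (hG : ArcsDescend K G) (he : 2 ≤ G.E.count (x, y))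
    (hE : G'.E = G.E.erase (x, y)) : CherryObstruction K G' a b u s L := by
  have hmem : (x, y) ∈ G.E := Multiset.count_pos.1 (by omega)
  have hsrc : ∀ v ∈ u :: L, x ≠ v := by
    rintro v hv rfl
    rcases List.mem_cons.1 hv with rfl | hv
    · obtain ⟨z, hz, hzy⟩ : ∃ z, (x, z) ∈ G.E ∧ z ≠ y := by
        by_cases h2 : y = L.headD a
        · exact ⟨s, h.side, h2 ▸ h.side_ne_head hG⟩
        · exact ⟨_, h.top_mem_E, Ne.symm h2⟩
      have := count_add_count_le_outDeg (G := G) (u := x) hzy.symm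
      have := Multiset.count_pos.2 hz
      have := h.outDeg_top
      omega
    · have := count_le_outDeg (G := G) x y
      have := (h.reticulate _ hv).2
      omega
  have hsrc_a : x ≠ a := by
    rintro rfl
    exact not_mem_of_outDeg_eq_zero h.outDeg_leaf hmem
  have htgt : ∀ v ∈ L, y ≠ v := by
    rintro v hv rfl
    obtain ⟨p, hp, hpy⟩ := h.exists_pred hv
    have := count_add_count_le_inDeg (G := G) (v := y) (hsrc p hp)
    have := Multiset.count_pos.2 hpy
    have := (h.reticulate _ hv).1
    omega
  have htgt_a : y ≠ a := by
    rintro rfl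
    have := count_le_inDeg (G := G) x y
    have := h.inDeg_leaf
    omega
  have hmem' := fun f => (mem_E_deleteParallel_iff (f := f) hE he).2
  exact ⟨h.chain.imp fun _ _ => hmem' _,
    (inDeg_deleteParallel hE hmem htgt_a).trans h.inDeg_leaf,
    (outDeg_deleteParallel hE hmem hsrc_a).trans h.outDeg_leaf,
    fun v hv => ⟨(inDeg_deleteParallel hE hmem (htgt v hv)).trans (h.reticulate v hv).1,
      (outDeg_deleteParallel hE hmem (hsrc v (List.mem_cons_of_mem _ hv))).trans
        (h.reticulate v hv).2⟩,
    (outDeg_deleteParallel hE hmem (hsrc u List.mem_cons_self)).trans h.outDeg_top,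
    hmem' _ h.side, h.not_reaches_head, h.not_reaches_of_nil⟩

theorem simpStep (hG : ArcsDescend K G) (hs : SimpStep G G') :
    ∃ s', CherryObstruction K G' a b u s' L := by
  rcases hs with ⟨w, hin, hout, p, c, hpw, hwc, -, hE⟩ | ⟨⟨x, y⟩, he, -, hE⟩
  · exact h.suppress hG hin hout hpw hwc hE
  · exact ⟨s, h.deleteParallel hG he hE⟩

theorem not_isCherry (hG : ArcsDescend K G) (hb : b ∈ K.V) (hab : a ≠ b) :
    ¬ ∃ q, (q, a) ∈ G.E ∧ (q, b) ∈ G.E := by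
  rintro ⟨q, hqa, hqb⟩
  obtain rfl := eq_of_inDeg_eq_one h.inDeg_leaf hqa h.last_mem_E
  cases L with
  | nil =>
    rcases eq_or_eq_of_outDeg_eq_two h.outDeg_top h.top_mem_E h.side hqb
      (h.side_ne_head hG).symm with hba | hbs
    · exact hab hba.symm
    · exact h.not_reaches_of_nil rfl (hbs ▸ .refl hb)
  | cons v L =>
    have hq : (u :: v :: L).getLast (List.cons_ne_nil _ _) ∈ v :: L := by
      rw [List.getLast_cons (List.cons_ne_nil _ _)]
      exact List.getLast_mem _
    exact hab (eq_of_outDeg_eq_one (h.reticulate _ hq).2 hqa hqb)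

end CherryObstruction

end Digraph'

namespace PhyloNet

open Digraph'

section Paths

variable {α : Type*} {N : PhyloNet α} {A : Finset α} {G : Digraph' α} {l : List α} {m r x y : α}

theorem reaches_of_mem_E (h : (x, y) ∈ N.G.E) : N.G.Reaches x y :=
  Digraph'.reaches_of_mem_E h (N.wf _ h).1 (N.wf _ h).2

theorem ne_of_mem_E (h : (x, y) ∈ N.G.E) : x ≠ y := by
  rintro rfl
  exact N.acyclic _ h (.refl (N.wf _ h).1)

theorem arcsDescend_of_le (h : G.E ≤ N.G.E) : ArcsDescend N.G G := fun _ he =>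
  let he := Multiset.mem_of_le h he
  ⟨ne_of_mem_E he, reaches_of_mem_E he⟩

theorem pathFrom_of_isChain (h : l.IsChain fun x y => (x, y) ∈ N.G.E) (hx : l.head? = some x)
    (hxV : x ∈ N.G.V) (hy : l.getLast? = some y) : N.G.PathFrom x y l := by
  obtain ⟨t, rfl⟩ : ∃ t, l = x :: t := by cases l <;> simp_all
  refine ⟨⟨List.cons_ne_nil _ _, fun z hz => ?_, h⟩, hx, hy⟩
  rcases List.mem_cons.1 hz with rfl | hz
  · exact hxV
  · exact h.cons_induction (· ∈ N.G.V) t (fun _ _ hxy _ => (N.wf _ hxy).2) hxV z hz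

theorem pathFrom_pair (h : (x, y) ∈ N.G.E) : N.G.PathFrom x y [x, y] :=
  pathFrom_of_isChain (List.isChain_pair.2 h) rfl (N.wf _ h).1 rfl

theorem reaches_of_stableAncestor (hr : N.G.StableAncestor N.root A r) (hx : x ∈ A)
    (hxV : x ∈ N.G.V) : N.G.Reaches r x := by
  obtain ⟨p, hp⟩ := N.reach x hxV
  exact hp.reaches_of_mem (hr x hx p hp)

theorem reaches_or_mem_of_stableAncestor (hr : N.G.StableAncestor N.root A r) (hx : x ∈ A)
    (hm : m ∈ N.G.V) (hl : N.G.PathFrom m x l) : N.G.Reaches r m ∨ r ∈ l := by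
  obtain ⟨l₀, hl₀⟩ := N.reach m hm
  rcases List.mem_append.1 (hr x hx _ (hl₀.append hl)) with h | h
  exacts [Or.inl (hl₀.reaches_of_mem h), Or.inr (List.mem_of_mem_tail h)]

end Paths

variable {α : Type*} [DecidableEq α] {N : PhyloNet α} {A : Finset α} {H : Digraph' α}
  {a b p u v x : α}

theorem binary_of_three_le_card (hX : 3 ≤ N.X.card) :
    N.G.outDeg N.root = 2 ∧
    (∀ x ∈ N.X, x ∈ N.G.V ∧ N.G.inDeg x = 1 ∧ N.G.outDeg x = 0) ∧
    (∀ v ∈ N.G.V, N.G.outDeg v = 0 → v ∈ N.X) ∧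
    (∀ v ∈ N.G.V, v ≠ N.root → v ∉ N.X →
      (N.G.inDeg v = 1 ∧ N.G.outDeg v = 2) ∨ (N.G.inDeg v = 2 ∧ N.G.outDeg v = 1)) := by
  -- `N.binary` was elaborated with the classical `DecidableEq` instance.
  have hinst : (fun a b => Classical.propDecidable (a = b)) = ‹DecidableEq α› :=
    Subsingleton.elim _ _
  rcases N.binary with ⟨-, -, hX1⟩ | h
  · rw [hX1, Finset.card_singleton] at hX
    omega
  · rw [hinst] at h
    exact h.2

theorem leaf_of_mem_X (hX : 3 ≤ N.X.card) (hx : x ∈ N.X) :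
    x ∈ N.G.V ∧ N.G.inDeg x = 1 ∧ N.G.outDeg x = 0 :=
  (binary_of_three_le_card hX).2.1 x hx

theorem outDeg_eq_two_or_of_mem_E (hX : 3 ≤ N.X.card) (h : (p, v) ∈ N.G.E) :
    N.G.outDeg p = 2 ∨ (N.G.inDeg p = 2 ∧ N.G.outDeg p = 1) := by
  obtain ⟨hroot, hleaf, -, hint⟩ := binary_of_three_le_card hX
  by_cases hpr : p = N.root
  · exact Or.inl (hpr ▸ hroot)
  by_cases hpX : p ∈ N.X
  · exact absurd h (not_mem_of_outDeg_eq_zero (hleaf p hpX).2.2)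
  · exact (hint p (N.wf _ h).1 hpr hpX).imp And.right id

theorem count_E_le_one (e : α × α) : N.G.E.count e ≤ 1 := by
  convert N.noParallel e

theorem exists_ne_child (h : N.G.outDeg u = 2) (x : α) : ∃ y, (u, y) ∈ N.G.E ∧ y ≠ x :=
  exists_ne_mem_E_of_outDeg_eq_two h (count_E_le_one _)

theorem exists_two_parents (h : N.G.inDeg v = 2) :
    ∃ p₁ p₂, (p₁, v) ∈ N.G.E ∧ (p₂, v) ∈ N.G.E ∧ p₁ ≠ p₂ := by
  obtain ⟨p₁, hp₁⟩ := exists_mem_E_of_inDeg_ne_zero (G := N.G) (v := v) (by omega)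
  obtain ⟨p₂, hp₂, hne⟩ := exists_ne_mem_E_of_inDeg_eq_two h (count_E_le_one (p₁, v))
  exact ⟨p₁, p₂, hp₁, hp₂, hne.symm⟩

theorem exists_reaches_leaf (hX : 3 ≤ N.X.card) (hv : v ∈ N.G.V) : ∃ x ∈ N.X, N.G.Reaches v x := by
  induction v using N.acyclic.wellFounded_descendant.induction with
  | _ v ih =>
  by_cases h0 : N.G.outDeg v = 0
  · exact ⟨v, (binary_of_three_le_card hX).2.2.1 v hv h0, .refl hv⟩
  obtain ⟨y, hy⟩ := exists_mem_E_of_outDeg_ne_zero h0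
  obtain ⟨x, hx, hyx⟩ := ih y ⟨reaches_of_mem_E hy, ne_of_mem_E hy⟩ (N.wf _ hy).2
  exact ⟨x, hx, (reaches_of_mem_E hy).trans hyx⟩

theorem Cherry.isCherry_of_exhibits (hX : 3 ≤ N.X.card) (h : N.Cherry a b) (haA : a ∈ A)
    (hbA : b ∈ A) (hH : N.Exhibits A H) : H.IsCherry a b := by
  obtain ⟨ha, hb, hab, q, hqa, hqb⟩ := h
  obtain ⟨r, ⟨hr, -⟩, hH⟩ := hH
  obtain ⟨haV, hia, hoa⟩ := leaf_of_mem_X hX ha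
  obtain ⟨hbV, -, hob⟩ := leaf_of_mem_X hX hb
  have hra : r ≠ a := by
    rintro rfl
    exact hab ((reaches_of_stableAncestor hr hbA hbV).eq_of_outDeg_eq_zero hoa).symm
  obtain ⟨y, hya, hry⟩ := (reaches_of_stableAncestor hr haA haV).exists_last_arc hra
  obtain rfl := eq_of_inDeg_eq_one hia hya hqa
  refine IsCherry.fullSimp hab ⟨?_, ?_, y, mem_pathGraph_E hry hya (.refl haV) haA,
    mem_pathGraph_E hry hqb (.refl hbV) hbA⟩ hH
  · exact Nat.le_zero.1 (hoa ▸ outDeg_pathGraph_le)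
  · exact Nat.le_zero.1 (hob ▸ outDeg_pathGraph_le)

end PhyloNet

namespace Digraph'.CherryObstruction

open PhyloNet

variable {α : Type*} [DecidableEq α] {N : PhyloNet α} {A : Finset α} {a b m r u s v : α}
  {L : List α} (h : CherryObstruction N.G N.G a b u s L)
include h

theorem pathFrom : N.G.PathFrom u a (u :: (L ++ [a])) :=
  pathFrom_of_isChain h.chain rfl (N.wf _ h.side).1 (List.getLast?_eq_some_iff.2 ⟨u :: L, rfl⟩)

theorem pathFrom_head : N.G.PathFrom (L.headD a) a (L ++ [a]) :=
  pathFrom_of_isChain h.chain.tail (by cases L <;> rfl) (N.wf _ h.top_mem_E).2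
    (List.getLast?_eq_some_iff.2 ⟨L, rfl⟩)

variable (hX : 3 ≤ N.X.card) (hb : b ∈ N.X) (hab : a ≠ b) (hr : N.G.StableAncestor N.root A r)
  (haA : a ∈ A) (hbA : b ∈ A)
include hX hb hab hr haA hbA

theorem not_mem_of_stableAncestor : ¬ (r ∈ L ∨ r = a) := fun hr' => by
  obtain ⟨hbV, -, hob⟩ := leaf_of_mem_X hX hb
  rcases h.mem_of_reaches hr' (reaches_of_stableAncestor hr hbA hbV) with hbL | rfl
  · have := (h.reticulate b hbL).2
    omega
  · exact hab rfl

theorem reaches_top_of_stableAncestor : N.G.Reaches r u := by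
  rcases reaches_or_mem_of_stableAncestor hr haA (N.wf _ h.side).1 h.pathFrom with hru | hru
  · exact hru
  rcases List.mem_cons.1 hru with rfl | hru
  · exact .refl (N.wf _ h.side).1
  · exact absurd (by simpa using hru) (h.not_mem_of_stableAncestor hX hb hab hr haA hbA)

/-- The second parent `m` of a reticulation `v` on the path also lies below `r`, since the path
`m → v → … → a` has to pass through `r`. -/
theorem reaches_parent_of_stableAncestor (hv : v ∈ L) (hmv : (m, v) ∈ N.G.E) :
    N.G.Reaches r m := by
  have hr_off := h.not_mem_of_stableAncestor hX hb hab hr haA hbA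
  obtain ⟨q, hq, hqsub⟩ := h.pathFrom_head.exists_suffix (List.mem_append_left _ hv)
  rcases reaches_or_mem_of_stableAncestor hr haA (N.wf _ hmv).1 ((pathFrom_pair hmv).append hq)
    with hrm | hrm
  · exact hrm
  simp only [List.cons_append, List.mem_cons, List.nil_append] at hrm
  rcases hrm with rfl | rfl | hrm
  · exact .refl (N.wf _ hmv).1
  · exact absurd (Or.inl hv) hr_off
  · exact absurd (by simpa using hqsub r (List.mem_of_mem_tail hrm)) hr_off

theorem pathGraph (hsA : ∃ l ∈ A, N.G.Reaches s l) :
    CherryObstruction N.G (N.G.pathGraph r A) a b u s L := by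
  have hru := h.reaches_top_of_stableAncestor hX hb hab hr haA hbA
  have hreach : ∀ x ∈ u :: (L ++ [a]), N.G.Reaches r x :=
    h.chain.induction _ _ (fun _ _ hxy hrx => hrx.trans (PhyloNet.reaches_of_mem_E hxy))
      fun _ => hru
  have hlift : ∀ x y, x ∈ u :: (L ++ [a]) → y ∈ u :: (L ++ [a]) → (x, y) ∈ N.G.E →
      (x, y) ∈ (N.G.pathGraph r A).E := fun x y hx hy hxy =>
    mem_pathGraph_E (hreach x hx) hxy (h.pathFrom.reaches_of_mem hy) haA
  have hsub : ∀ x ∈ u :: L, x ∈ u :: (L ++ [a]) := fun x hx => by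
    simp only [List.mem_cons, List.mem_append] at hx ⊢
    tauto
  obtain ⟨l, hlA, hsl⟩ := hsA
  have hside := mem_pathGraph_E hru h.side hsl hlA
  refine ⟨h.chain.imp_of_mem_imp hlift, le_antisymm (h.inDeg_leaf ▸ inDeg_pathGraph_le)
    (one_le_inDeg (hlift _ _ (hsub _ (List.getLast_mem _)) (by simp) h.last_mem_E)),
    Nat.le_zero.1 (h.outDeg_leaf ▸ outDeg_pathGraph_le), fun v hv => ⟨?_, ?_⟩,
    le_antisymm (h.outDeg_top ▸ outDeg_pathGraph_le) (two_le_outDeg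
      (hlift _ _ List.mem_cons_self (by cases L <;> simp) h.top_mem_E) hside
      (h.side_ne_head (arcsDescend_of_le le_rfl)).symm),
    hside, h.not_reaches_head, h.not_reaches_of_nil⟩
  · obtain ⟨p, hp, hpv⟩ := h.exists_pred hv
    obtain ⟨m, hmv, hmp⟩ :=
      exists_ne_mem_E_of_inDeg_eq_two (h.reticulate v hv).1 (count_E_le_one (p, v))
    have hmvA := mem_pathGraph_E (h.reaches_parent_of_stableAncestor hX hb hab hr haA hbA hv hmv)
      hmv (h.pathFrom.reaches_of_mem (by simp [hv])) haA
    exact le_antisymm ((h.reticulate v hv).1 ▸ inDeg_pathGraph_le)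
      (two_le_inDeg (hlift p v (hsub p hp) (by simp [hv]) hpv) hmvA hmp.symm)
  · obtain ⟨y, hy, hvy⟩ := h.exists_succ hv
    exact le_antisymm ((h.reticulate v hv).2 ▸ outDeg_pathGraph_le)
      (one_le_outDeg (hlift v y (by simp [hv]) (List.mem_cons_of_mem _ hy) hvy))

omit hr haA hbA in
theorem exists_trinet_not_isCherry (ha : a ∈ N.X) :
    ∃ A ⊆ N.X, A.card = 3 ∧ a ∈ A ∧ b ∈ A ∧
      ∃ H, N.Exhibits A H ∧ ¬ ∃ p, (p, a) ∈ H.E ∧ (p, b) ∈ H.E := by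
  -- The third leaf is taken below `s`, so that the arc `(u, s)` survives in the path graph.
  obtain ⟨l, hl, hsl⟩ := exists_reaches_leaf hX (N.wf _ h.side).2
  obtain ⟨A, habl, hAX, hA3⟩ := Finset.exists_subsuperset_card_eq (s := {a, b, l}) (n := 3)
    (by simp [Finset.insert_subset_iff, ha, hb, hl]) Finset.card_le_three hX
  have haA : a ∈ A := habl (by simp)
  have hbA : b ∈ A := habl (by simp)
  obtain ⟨r, hr⟩ := N.acyclic.exists_isLowestSA N.root A
  obtain ⟨H, hH, hHN, s', hs'⟩ := exists_fullSimp
    (P := fun G => ArcsDescend N.G G ∧ ∃ s, CherryObstruction N.G G a b u s L)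
    (fun _ _ ⟨hG, _, hs⟩ hstep =>
      ⟨⟨(hG.simpStep N.acyclic hstep).1, hs.simpStep hG hstep⟩, (hG.simpStep N.acyclic hstep).2⟩)
    _ ⟨arcsDescend_of_le pathGraph_E_le, s,
      h.pathGraph hX hb hab hr.1 haA hbA ⟨l, habl (by simp), hsl⟩⟩
  exact ⟨A, hAX, hA3, haA, hbA, H, ⟨r, hr, hH⟩,
    hs'.not_isCherry hHN (leaf_of_mem_X hX hb).1 hab⟩

end Digraph'.CherryObstruction

namespace PhyloNet

open Digraph'

variable {α : Type*} [DecidableEq α] {N : PhyloNet α} {a b p p₁ p₂ s₁ s₂ v z : α}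

/-- If the other children of both parents of a reticulation `v` reached `v`, each would have to
reach the opposite parent, closing a directed cycle. -/
theorem not_reaches_or_not_reaches (hv : N.G.inDeg v = 2) (hp₁ : (p₁, v) ∈ N.G.E)
    (hp₂ : (p₂, v) ∈ N.G.E) (hp : p₁ ≠ p₂) (hs₁ : (p₁, s₁) ∈ N.G.E) (hs₂ : (p₂, s₂) ∈ N.G.E)
    (hs₁v : s₁ ≠ v) (hs₂v : s₂ ≠ v) : ¬ N.G.Reaches s₁ v ∨ ¬ N.G.Reaches s₂ v := by
  by_contra! ⟨h₁, h₂⟩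
  have enter : ∀ {s}, s ≠ v → N.G.Reaches s v → N.G.Reaches s p₁ ∨ N.G.Reaches s p₂ := by
    intro s hsv h
    obtain ⟨y, hyv, hsy⟩ := h.exists_last_arc hsv
    rcases eq_or_eq_of_inDeg_eq_two hv hp₁ hp₂ hyv hp with rfl | rfl
    exacts [Or.inl hsy, Or.inr hsy]
  have h₁₂ := (enter hs₁v h₁).resolve_left (N.acyclic _ hs₁)
  have h₂₁ := (enter hs₂v h₂).resolve_right (N.acyclic _ hs₂)
  exact N.acyclic _ hs₁ (h₁₂.trans ((reaches_of_mem_E hs₂).trans h₂₁))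

theorem exists_cherryObstruction_of_reticulation (hX : 3 ≤ N.X.card) (ha : a ∈ N.X)
    (hv : N.G.inDeg v = 2 ∧ N.G.outDeg v = 1) (K : List α)
    (hK : ∀ x ∈ K, N.G.inDeg x = 2 ∧ N.G.outDeg x = 1)
    (hch : (v :: (K ++ [a])).IsChain fun x y => (x, y) ∈ N.G.E) :
    ∃ u s L, CherryObstruction N.G N.G a b u s L := by
  induction v using N.acyclic.wellFounded_ancestor.induction generalizing K with
  | _ v ih =>
  obtain ⟨-, hia, hoa⟩ := leaf_of_mem_X hX ha
  have hL : ∀ x ∈ v :: K, N.G.inDeg x = 2 ∧ N.G.outDeg x = 1 :=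
    List.forall_mem_cons.2 ⟨hv, hK⟩
  have climb : ∀ p, (p, v) ∈ N.G.E → N.G.inDeg p = 2 ∧ N.G.outDeg p = 1 →
      ∃ u s L, CherryObstruction N.G N.G a b u s L := fun p hpv hp =>
    ih p ⟨reaches_of_mem_E hpv, ne_of_mem_E hpv⟩ hp (v :: K) hL
      (List.isChain_cons_cons.2 ⟨hpv, hch⟩)
  have obstruct : ∀ p s, (p, v) ∈ N.G.E → N.G.outDeg p = 2 → (p, s) ∈ N.G.E →
      ¬ N.G.Reaches s v → ∃ u s L, CherryObstruction N.G N.G a b u s L :=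
    fun p s hpv hp hs hsv => ⟨p, s, v :: K, List.isChain_cons_cons.2 ⟨hpv, hch⟩, hia, hoa, hL,
      hp, hs, hsv, fun h => absurd h (List.cons_ne_nil _ _)⟩
  obtain ⟨p₁, p₂, hp₁, hp₂, hp⟩ := exists_two_parents hv.1
  rcases outDeg_eq_two_or_of_mem_E hX hp₁ with h₁ | h₁
  swap
  · exact climb p₁ hp₁ h₁
  rcases outDeg_eq_two_or_of_mem_E hX hp₂ with h₂ | h₂
  swap
  · exact climb p₂ hp₂ h₂
  obtain ⟨s₁, hs₁, hs₁v⟩ := exists_ne_child h₁ v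
  obtain ⟨s₂, hs₂, hs₂v⟩ := exists_ne_child h₂ v
  rcases not_reaches_or_not_reaches hv.1 hp₁ hp₂ hp hs₁ hs₂ hs₁v hs₂v with h | h
  exacts [obstruct p₁ s₁ hp₁ h₁ hs₁ h, obstruct p₂ s₂ hp₂ h₂ hs₂ h]

theorem cherryObstruction_of_tree_parent (hX : 3 ≤ N.X.card) (ha : a ∈ N.X)
    (hpa : (p, a) ∈ N.G.E) (hp : N.G.outDeg p = 2) (hz : (p, z) ∈ N.G.E) (hza : z ≠ a)
    (hzb : ¬ N.G.Reaches z b) : CherryObstruction N.G N.G a b p z [] := by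
  obtain ⟨-, hia, hoa⟩ := leaf_of_mem_X hX ha
  exact ⟨List.isChain_pair.2 hpa, hia, hoa, by simp, hp, hz,
    fun hz' => N.acyclic _ hz (hz'.reaches_parent hza hia hpa), fun _ => hzb⟩

theorem exists_cherryObstruction (hX : 3 ≤ N.X.card) (ha : a ∈ N.X) (hb : b ∈ N.X)
    (hab : a ≠ b) (hnc : ¬ N.Cherry a b) :
    (∃ u s L, CherryObstruction N.G N.G a b u s L) ∨
      ∃ u s L, CherryObstruction N.G N.G b a u s L := by
  obtain ⟨-, hia, -⟩ := leaf_of_mem_X hX ha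
  obtain ⟨-, hib, -⟩ := leaf_of_mem_X hX hb
  have hcherry : ∀ {p}, (p, a) ∈ N.G.E → (p, b) ∈ N.G.E → False := fun h₁ h₂ =>
    hnc ⟨ha, hb, hab, _, h₁, h₂⟩
  obtain ⟨pa, hpa⟩ := exists_mem_E_of_inDeg_ne_zero (hia ▸ one_ne_zero)
  obtain ⟨pb, hpb⟩ := exists_mem_E_of_inDeg_ne_zero (hib ▸ one_ne_zero)
  rcases outDeg_eq_two_or_of_mem_E hX hpa with hpa2 | hret
  swap
  · exact .inl (exists_cherryObstruction_of_reticulation hX ha hret [] (by simp)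
      (List.isChain_pair.2 hpa))
  obtain ⟨z, hz, hza⟩ := exists_ne_child hpa2 a
  by_cases hzb : N.G.Reaches z b
  swap
  · exact .inl ⟨pa, z, [], cherryObstruction_of_tree_parent hX ha hpa hpa2 hz hza hzb⟩
  -- Now `z` reaches `b`, so `pa` lies above `pb`, and the obstruction is found at `b`.
  refine .inr ?_
  have hpapb : N.G.Reaches pa pb := (reaches_of_mem_E hz).trans
    (hzb.reaches_parent (fun h => hcherry hpa (h ▸ hz)) hib hpb)
  rcases outDeg_eq_two_or_of_mem_E hX hpb with hpb2 | hret
  swap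
  · exact exists_cherryObstruction_of_reticulation hX hb hret [] (by simp)
      (List.isChain_pair.2 hpb)
  obtain ⟨z', hz', hz'b⟩ := exists_ne_child hpb2 b
  refine ⟨pb, z', [], cherryObstruction_of_tree_parent hX hb hpb hpb2 hz' hz'b fun hz'a => ?_⟩
  have hz'a' : z' ≠ a := fun h => hcherry (h ▸ hz') hpb
  obtain rfl := N.acyclic.eq_of_reaches hpapb
    ((reaches_of_mem_E hz').trans (hz'a.reaches_parent hz'a' hia hpa))
  exact hcherry hpa hpb

end PhyloNet

/-- `{a, b}` is a cherry of `N` iff `{a, b}` is a cherry of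
every exhibited trinet `N_A` with `a, b ∈ A`. -/
theorem cherry_iff_cherry_trinets
    {α : Type*} [DecidableEq α] (N : PhyloNet α) (hX : 3 ≤ N.X.card)
    (a b : α) (ha : a ∈ N.X) (hb : b ∈ N.X) (hab : a ≠ b) :
    N.Cherry a b ↔
      ∀ A : Finset α, A ⊆ N.X → A.card = 3 → a ∈ A → b ∈ A →
        ∀ H : Digraph' α, N.Exhibits A H →
          ∃ p, (p, a) ∈ H.E ∧ (p, b) ∈ H.E := by
  refine ⟨fun h A _ _ haA hbA H hH => (h.isCherry_of_exhibits hX haA hbA hH).2.2, fun h => ?_⟩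
  by_contra hnc
  rcases PhyloNet.exists_cherryObstruction hX ha hb hab hnc with ⟨u, s, L, hO⟩ | ⟨u, s, L, hO⟩
  · obtain ⟨A, hAX, hA3, haA, hbA, H, hH, hnot⟩ := hO.exists_trinet_not_isCherry hX hb hab ha
    exact hnot (h A hAX hA3 haA hbA H hH)
  · obtain ⟨A, hAX, hA3, hbA, haA, H, hH, hnot⟩ :=
      hO.exists_trinet_not_isCherry hX ha hab.symm hb
    obtain ⟨p, hpa, hpb⟩ := h A hAX hA3 haA hbA H hH
    exact hnot ⟨p, hpb, hpa⟩
end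

section
/- Let N be a rooted binary phylogenetic network on X, let {a, b} be a cherry of N, and let N' be obtained from N by reducing b. Then for every subset A of X − {b}, the network exhibited by N on A is isomorphic to the network exhibited by N' on A. -/
open scoped Classical

/-!
Full simplification is confluent: on graphs carrying a height function that decreases along arcs,
any two simplification steps (suppressing a vertex, deleting a parallel arc) can be completed to a
common graph in one step each, so by Church–Rosser the fully simplified graph is unique. It
therefore suffices to compare path graphs.

If `A ⊆ {a}`, both exhibited networks are trivial. Otherwise `A` contains a leaf `x₀ ∉ {a, b}`,
so the parent `p` of the cherry is not the root (else every leaf would be a child of the root),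
and `N'` is `N` with `b` deleted and `p` suppressed, the parent `g` of `p` becoming the parent of
`a`. Away from `a` and `p`, the `N'`-paths to leaves other than `b` are exactly the `N`-paths with
`p` erased. Hence `N` and `N'` have the same lowest stable ancestor `r` of `A`, and the path graph
of `N'` on `A` is that of `N` with `p` suppressed when `a ∈ A`, and equal to it otherwise. Either
way the two full simplifications coincide.
-/

namespace List

variable {α : Type*}

theorem mem_zip_tail_append {q s : List α} {e : α × α} :
    e ∈ (q ++ s).zip (q ++ s).tail ↔
      e ∈ q.zip q.tail ∨ e ∈ s.zip s.tail ∨ (q.getLast? = some e.1 ∧ s.head? = some e.2) := by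
  induction q with
  | nil => simp
  | cons x q ih =>
    cases q with
    | nil => cases s <;> simp [Prod.ext_iff, eq_comm, or_comm]
    | cons y q =>
      simp only [cons_append, tail_cons, zip_cons_cons, mem_cons, getLast?_cons_cons] at ih ⊢
      rw [ih]
      tauto

theorem mem_of_mem_zip_tail {q : List α} {e : α × α} (h : e ∈ q.zip q.tail) :
    e.1 ∈ q ∧ e.2 ∈ q :=
  ⟨(of_mem_zip h).1, mem_of_mem_tail (of_mem_zip h).2⟩

theorem isChain_iff_forall_mem_zip_tail {R : α → α → Prop} {q : List α} :
    IsChain R q ↔ ∀ e ∈ q.zip q.tail, R e.1 e.2 := by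
  induction q with
  | nil => simp
  | cons x q ih =>
    cases q with
    | nil => simp
    | cons y q => simp_all [isChain_cons_cons]

end List

theorem Multiset.mem_of_filter_eq_singleton {β : Type*} {s : Multiset β} {P : β → Prop}
    [DecidablePred P] {b : β} (h : s.filter P = {b}) : b ∈ s :=
  Multiset.mem_of_mem_filter (h ▸ Multiset.mem_singleton_self b)

theorem Multiset.filter_erase {β : Type*} [DecidableEq β] (s : Multiset β) (P : β → Prop)
    [DecidablePred P] (b : β) :
    (s.erase b).filter P = if P b then (s.filter P).erase b else s.filter P := by
  ext x
  by_cases hx : x = b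
  · subst hx
    split_ifs with h <;> simp [h]
  · split_ifs <;> simp [Multiset.count_filter, Multiset.count_erase_of_ne hx]

namespace Digraph'

section Paths

variable {α : Type*} {G : Digraph' α} {q l₁ l₂ : List α} {u v x : α}

theorem isPath_iff :
    G.IsPath q ↔ q ≠ [] ∧ (∀ v ∈ q, v ∈ G.V) ∧ ∀ e ∈ q.zip q.tail, e ∈ G.E :=
  Iff.rfl.and (Iff.rfl.and List.isChain_iff_forall_mem_zip_tail)

theorem IsPath.mem_V (hq : G.IsPath q) (hv : v ∈ q) : v ∈ G.V :=
  (isPath_iff.1 hq).2.1 v hv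

theorem IsPath.arc_mem (hq : G.IsPath q) {e : α × α} (he : e ∈ q.zip q.tail) : e ∈ G.E :=
  (isPath_iff.1 hq).2.2 e he

theorem isPath_singleton (hv : v ∈ G.V) : G.IsPath [v] :=
  isPath_iff.2 ⟨by simp, by simpa using hv, by simp⟩

theorem isPath_pair (huv : (u, v) ∈ G.E) (hu : u ∈ G.V) (hv : v ∈ G.V) : G.IsPath [u, v] :=
  isPath_iff.2 ⟨by simp, by simp [hu, hv], by simpa using huv⟩

theorem IsPath.of_append_left (hq : G.IsPath (l₁ ++ l₂)) (hl₁ : l₁ ≠ []) : G.IsPath l₁ :=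
  isPath_iff.2 ⟨hl₁, fun _ hv => hq.mem_V (List.mem_append_left _ hv),
    fun _ he => hq.arc_mem (List.mem_zip_tail_append.2 (Or.inl he))⟩

theorem IsPath.of_append_right (hq : G.IsPath (l₁ ++ l₂)) (hl₂ : l₂ ≠ []) : G.IsPath l₂ :=
  isPath_iff.2 ⟨hl₂, fun _ hv => hq.mem_V (List.mem_append_right _ hv),
    fun _ he => hq.arc_mem (List.mem_zip_tail_append.2 (Or.inr (Or.inl he)))⟩

theorem IsPath.append (h₁ : G.IsPath l₁) (h₂ : G.IsPath l₂)
    (h : ∀ x ∈ l₁.getLast?, ∀ y ∈ l₂.head?, (x, y) ∈ G.E) : G.IsPath (l₁ ++ l₂) := by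
  refine isPath_iff.2 ⟨by simp [(isPath_iff.1 h₁).1], fun v hv => ?_, fun e he => ?_⟩
  · rcases List.mem_append.1 hv with hv | hv
    exacts [h₁.mem_V hv, h₂.mem_V hv]
  · rcases List.mem_zip_tail_append.1 he with he | he | ⟨hx, hy⟩
    exacts [h₁.arc_mem he, h₂.arc_mem he, h _ hx _ hy]

theorem IsPath.arc_mem_of_eq_append (hq : G.IsPath (l₁ ++ u :: v :: l₂)) : (u, v) ∈ G.E :=
  hq.arc_mem (List.mem_zip_tail_append.2 (Or.inr (Or.inl (by simp))))

theorem IsPath.reaches_of_mem (hq : G.IsPath q) (hx : q.head? = some x) (hv : v ∈ q) :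
    G.Reaches x v := by
  obtain ⟨l₁, l₂, rfl⟩ := List.append_of_mem hv
  refine ⟨l₁ ++ [v], ?_, ?_, by simp⟩
  · exact (show G.IsPath (l₁ ++ [v] ++ l₂) by simpa using hq).of_append_left (by simp)
  · cases l₁ <;> simpa using hx

theorem IsPath.mem_reaches (hq : G.IsPath q) (hx : q.getLast? = some x) (hv : v ∈ q) :
    G.Reaches v x := by
  obtain ⟨l₁, l₂, rfl⟩ := List.append_of_mem hv
  exact ⟨v :: l₂, hq.of_append_right (by simp), rfl, by simpa using hx⟩

theorem IsPath.reaches_or_reaches (hq : G.IsPath q) (hu : u ∈ q) (hv : v ∈ q) :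
    G.Reaches u v ∨ G.Reaches v u := by
  obtain ⟨l₁, l₂, rfl⟩ := List.append_of_mem hu
  have hu' : G.IsPath (u :: l₂) := hq.of_append_right (by simp)
  rcases List.mem_append.1 hv with hv | hv
  · obtain ⟨m₁, m₂, rfl⟩ := List.append_of_mem hv
    have hv' : G.IsPath (v :: (m₂ ++ u :: l₂)) :=
      (show G.IsPath (m₁ ++ v :: (m₂ ++ u :: l₂)) by simpa using hq).of_append_right (by simp)
    exact Or.inr (hv'.reaches_of_mem rfl (by simp))
  · exact Or.inl (hu'.reaches_of_mem rfl hv)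

theorem IsPath.exists_arc_of_mem (hq : G.IsPath q) (hv : v ∈ q) (hlast : q.getLast? ≠ some v) :
    ∃ y ∈ q, (v, y) ∈ G.E := by
  obtain ⟨l₁, l₂, rfl⟩ := List.append_of_mem hv
  cases l₂ with
  | nil => simp at hlast
  | cons y l₂ =>
    exact ⟨y, by simp, hq.arc_mem (List.mem_zip_tail_append.2 (Or.inr (Or.inl (by simp))))⟩

theorem IsPath.getLast?_eq_of_sink (hq : G.IsPath q) (hv : v ∈ q) (hsink : ∀ y, (v, y) ∉ G.E) :
    q.getLast? = some v := by
  by_contra hlast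
  obtain ⟨y, -, hy⟩ := hq.exists_arc_of_mem hv hlast
  exact hsink y hy

theorem PathFrom.eq_of_sink (hq : G.PathFrom u x q) (hv : v ∈ q) (hsink : ∀ y, (v, y) ∉ G.E) :
    v = x :=
  Option.some_injective _ ((hq.1.getLast?_eq_of_sink hv hsink).symm.trans hq.2.2)

theorem IsPath.nodup (hq : G.IsPath q) (hG : G.Acyclic) : q.Nodup := by
  induction q with
  | nil => simp
  | cons x q ih =>
    cases q with
    | nil => simp
    | cons y q =>
      have htail : G.IsPath (y :: q) := hq.of_append_right (l₁ := [x]) (by simp)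
      refine List.nodup_cons.2 ⟨fun hx => ?_, ih htail⟩
      exact hG (x, y) (hq.arc_mem (by simp)) (htail.reaches_of_mem rfl hx)

theorem reaches_refl (hv : v ∈ G.V) : G.Reaches v v :=
  ⟨[v], isPath_singleton hv, rfl, rfl⟩

theorem Reaches.cons (he : (u, v) ∈ G.E) (hu : u ∈ G.V) (h : G.Reaches v x) : G.Reaches u x := by
  obtain ⟨q, hq, hhead, hlast⟩ := h
  obtain ⟨q, rfl⟩ : ∃ q', q = v :: q' := by cases q <;> simp_all
  refine ⟨u :: v :: q, isPath_iff.2 ⟨by simp, ?_, ?_⟩, rfl, by simpa using hlast⟩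
  · intro w hw
    rcases List.mem_cons.1 hw with rfl | hw
    exacts [hu, hq.mem_V hw]
  · intro e' he'
    rw [List.tail_cons, List.zip_cons_cons, List.mem_cons] at he'
    rcases he' with rfl | he'
    exacts [he, hq.arc_mem he']

theorem PathFrom.eq_singleton_of_sink (hq : G.PathFrom x v q) (hx : ∀ y, (x, y) ∉ G.E) :
    q = [x] := by
  obtain ⟨hq, hhead, -⟩ := hq
  match q, hhead with
  | [_], rfl => rfl
  | _ :: y :: _, rfl => exact absurd (hq.arc_mem (by simp)) (hx y)

theorem PathFrom.exists_eq_append (hq : G.PathFrom u v q) (huv : u ≠ v) :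
    ∃ q₀, q₀ ≠ [] ∧ q = q₀ ++ [v] := by
  obtain ⟨q₀, rfl⟩ := List.getLast?_eq_some_iff.1 hq.2.2
  refine ⟨q₀, ?_, rfl⟩
  rintro rfl
  exact huv (by simpa using hq.2.1.symm)

/-- Unlike acyclicity, the existence of such a height function is evidently preserved by
simplification steps. -/
def Ranked (G : Digraph' α) : Prop := ∃ f : α → ℕ, ∀ e ∈ G.E, f e.2 < f e.1

theorem Acyclic.ranked (hwf : ∀ e ∈ G.E, e.1 ∈ G.V ∧ e.2 ∈ G.V) (hG : G.Acyclic) : G.Ranked := by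
  refine ⟨fun v => (G.V.filter (G.Reaches v)).card, fun e he => Finset.card_lt_card ?_⟩
  refine (Finset.ssubset_iff_of_subset fun w hw => ?_).2 ⟨e.1, ?_, fun h => ?_⟩
  · simp only [Finset.mem_filter] at hw ⊢
    exact ⟨hw.1, hw.2.cons he (hwf e he).1⟩
  · exact Finset.mem_filter.2 ⟨(hwf e he).1, reaches_refl (hwf e he).1⟩
  · exact hG e he (Finset.mem_filter.1 h).2

theorem IsLowestSA.eq {ρ : α} {A : Finset α} (hx : x ∈ A) (hρx : G.Reaches ρ x)
    (hu : G.IsLowestSA ρ A u) (hv : G.IsLowestSA ρ A v) : u = v := by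
  by_contra hne
  obtain ⟨q, hq⟩ := hρx
  rcases hq.1.reaches_or_reaches (hu.1 x hx q hq) (hv.1 x hx q hq) with h | h
  · exact hu.2 v hv.1 (Ne.symm hne) h
  · exact hv.2 u hu.1 hne h

theorem IsLowestSA.eq_of_singleton {ρ : α} (hρx : G.Reaches ρ x) (hu : G.IsLowestSA ρ {x} u) :
    u = x := by
  by_contra hne
  obtain ⟨q, hq⟩ := hρx
  have hx : G.StableAncestor ρ {x} x := by
    rintro y hy q' hq'
    rw [Finset.mem_singleton.1 hy] at hq'
    exact List.mem_of_getLast? hq'.2.2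
  exact hu.2 x hx (Ne.symm hne)
    (hq.1.mem_reaches hq.2.2 (hu.1 x (Finset.mem_singleton_self x) q hq))

theorem IsoOn.refl (H : Digraph' α) (A : Finset α) : IsoOn H H A :=
  ⟨id, Set.bijOn_id _, fun _ _ => rfl, by simp⟩

end Paths

end Digraph'

namespace Digraph'

section Simplification

variable {α : Type*} [DecidableEq α] {G G' G₁ G₂ H H' H₁ H₂ : Digraph' α} {w w₁ w₂ u c : α}

attribute [ext] Digraph'

theorem Suppress.exists_filter_eq (h : G.Suppress w G') :
    ∃ u c, G.E.filter (·.2 = w) = {(u, w)} ∧ G.E.filter (·.1 = w) = {(w, c)} ∧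
      G'.V = G.V.erase w ∧ G'.E = G.E.filter (fun e => e.1 ≠ w ∧ e.2 ≠ w) + {(u, c)} := by
  obtain ⟨hin, hout, u, c, hu, hc, hV, hE⟩ := h
  have filter_eq {P : α × α → Prop} [DecidablePred P] {e : α × α} (he : e ∈ G.E) (hP : P e)
      (hcard : Multiset.card (G.E.filter P) = 1) : G.E.filter P = {e} := by
    obtain ⟨e', he'⟩ := Multiset.card_eq_one.1 hcard
    rwa [Multiset.mem_singleton.1 (he' ▸ Multiset.mem_filter.2 ⟨he, hP⟩ :)]
  exact ⟨u, c, filter_eq hu rfl hin, filter_eq hc rfl hout, hV, hE⟩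

theorem suppress_of_filter_eq (hin : G.E.filter (·.2 = w) = {(u, w)})
    (hout : G.E.filter (·.1 = w) = {(w, c)}) (hV : G'.V = G.V.erase w)
    (hE : G'.E = G.E.filter (fun e => e.1 ≠ w ∧ e.2 ≠ w) + {(u, c)}) : G.Suppress w G' :=
  ⟨by simp [inDeg, hin], by simp [outDeg, hout], u, c, Multiset.mem_of_filter_eq_singleton hin,
    Multiset.mem_of_filter_eq_singleton hout, hV, by simpa [deleteVertex] using hE⟩

theorem Suppress.eq (h₁ : G.Suppress w G₁) (h₂ : G.Suppress w G₂) : G₁ = G₂ := by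
  obtain ⟨u₁, c₁, hin₁, hout₁, hV₁, hE₁⟩ := h₁.exists_filter_eq
  obtain ⟨u₂, c₂, hin₂, hout₂, hV₂, hE₂⟩ := h₂.exists_filter_eq
  rw [hin₁, Multiset.singleton_inj, Prod.mk.injEq] at hin₂
  rw [hout₁, Multiset.singleton_inj, Prod.mk.injEq] at hout₂
  ext1
  · rw [hV₁, hV₂]
  · rw [hE₁, hE₂, hin₂.1, hout₂.2]

theorem suppress_suppress_of_not_adj {u₁ c₁ u₂ c₂ : α}
    (hin₁ : G.E.filter (·.2 = w₁) = {(u₁, w₁)}) (hout₁ : G.E.filter (·.1 = w₁) = {(w₁, c₁)})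
    (hin₂ : G.E.filter (·.2 = w₂) = {(u₂, w₂)}) (hout₂ : G.E.filter (·.1 = w₂) = {(w₂, c₂)})
    (hne : w₁ ≠ w₂) (h₁₂ : (w₁, w₂) ∉ G.E) (h₂₁ : (w₂, w₁) ∉ G.E) :
    Suppress ⟨G.V.erase w₁, G.E.filter (fun e => e.1 ≠ w₁ ∧ e.2 ≠ w₁) + {(u₁, c₁)}⟩ w₂
      ⟨(G.V.erase w₁).erase w₂,
        (G.E.filter fun e => e.1 ≠ w₁ ∧ e.2 ≠ w₁).filter (fun e => e.1 ≠ w₂ ∧ e.2 ≠ w₂) +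
          {(u₁, c₁)} + {(u₂, c₂)}⟩ := by
  have hu₂ : u₂ ≠ w₁ := by rintro rfl; exact h₁₂ (Multiset.mem_of_filter_eq_singleton hin₂)
  have hc₂ : c₂ ≠ w₁ := by rintro rfl; exact h₂₁ (Multiset.mem_of_filter_eq_singleton hout₂)
  have hu₁ : u₁ ≠ w₂ := by rintro rfl; exact h₂₁ (Multiset.mem_of_filter_eq_singleton hin₁)
  have hc₁ : c₁ ≠ w₂ := by rintro rfl; exact h₁₂ (Multiset.mem_of_filter_eq_singleton hout₁)
  refine suppress_of_filter_eq (u := u₂) (c := c₂) ?_ ?_ rfl ?_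
  · rw [Multiset.filter_add, Multiset.filter_comm, hin₂, Multiset.filter_singleton,
      Multiset.filter_singleton, if_pos ⟨hu₂, hne.symm⟩, if_neg (by simpa using hc₁)]
    rfl
  · rw [Multiset.filter_add, Multiset.filter_comm, hout₂, Multiset.filter_singleton,
      Multiset.filter_singleton, if_pos ⟨hne.symm, hc₂⟩, if_neg (by simpa using hu₁)]
    rfl
  · rw [Multiset.filter_add, Multiset.filter_singleton, if_pos ⟨hu₁, hc₁⟩]

theorem Suppress.diamond_of_not_adj (h₁ : G.Suppress w₁ G₁) (h₂ : G.Suppress w₂ G₂)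
    (hne : w₁ ≠ w₂) (h₁₂ : (w₁, w₂) ∉ G.E) (h₂₁ : (w₂, w₁) ∉ G.E) :
    ∃ D, G₁.Suppress w₂ D ∧ G₂.Suppress w₁ D := by
  obtain ⟨u₁, c₁, hin₁, hout₁, hV₁, hE₁⟩ := h₁.exists_filter_eq
  obtain ⟨u₂, c₂, hin₂, hout₂, hV₂, hE₂⟩ := h₂.exists_filter_eq
  obtain rfl : G₁ = ⟨_, _⟩ := Digraph'.ext hV₁ hE₁
  obtain rfl : G₂ = ⟨_, _⟩ := Digraph'.ext hV₂ hE₂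
  refine ⟨_, suppress_suppress_of_not_adj hin₁ hout₁ hin₂ hout₂ hne h₁₂ h₂₁, ?_⟩
  convert suppress_suppress_of_not_adj hin₂ hout₂ hin₁ hout₁ hne.symm h₂₁ h₁₂ using 2
  · exact Finset.erase_right_comm
  · rw [Multiset.filter_comm, add_right_comm]

theorem Suppress.diamond_of_arc (hR : G.Ranked) (h₁ : G.Suppress w₁ G₁) (h₂ : G.Suppress w₂ G₂)
    (h₁₂ : (w₁, w₂) ∈ G.E) : ∃ D, G₁.Suppress w₂ D ∧ G₂.Suppress w₁ D := by
  obtain ⟨u₁, c₁, hin₁, hout₁, hV₁, hE₁⟩ := h₁.exists_filter_eq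
  obtain ⟨u₂, c₂, hin₂, hout₂, hV₂, hE₂⟩ := h₂.exists_filter_eq
  obtain rfl : w₂ = c₁ := by
    have h : (w₁, w₂) ∈ G.E.filter (·.1 = w₁) := Multiset.mem_filter.2 ⟨h₁₂, rfl⟩
    simpa [hout₁] using h
  obtain rfl : w₁ = u₂ := by
    have h : (w₁, w₂) ∈ G.E.filter (·.2 = w₂) := Multiset.mem_filter.2 ⟨h₁₂, rfl⟩
    simpa [hin₂] using h
  obtain ⟨f, hf⟩ := hR
  have hu₁ := hf _ (Multiset.mem_of_filter_eq_singleton hin₁)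
  have hc₂ := hf _ (Multiset.mem_of_filter_eq_singleton hout₂)
  have h₁₂' := hf _ h₁₂
  simp only at hu₁ hc₂ h₁₂'
  have hu₁w₂ : u₁ ≠ w₂ := by rintro rfl; omega
  have hc₂w₁ : c₂ ≠ w₁ := by rintro rfl; omega
  have hne : w₂ ≠ w₁ := by rintro rfl; omega
  refine ⟨⟨(G.V.erase w₁).erase w₂,
    (G.E.filter fun e => e.1 ≠ w₁ ∧ e.2 ≠ w₁).filter (fun e => e.1 ≠ w₂ ∧ e.2 ≠ w₂) + {(u₁, c₂)}⟩,
    suppress_of_filter_eq (u := u₁) (c := c₂) ?_ ?_ (by rw [hV₁]) ?_,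
    suppress_of_filter_eq (u := u₁) (c := c₂) ?_ ?_ (by rw [hV₂, Finset.erase_right_comm]) ?_⟩
  · rw [hE₁, Multiset.filter_add, Multiset.filter_comm, hin₂]
    simp [Multiset.filter_singleton, hne]
  · rw [hE₁, Multiset.filter_add, Multiset.filter_comm, hout₂]
    simp [Multiset.filter_singleton, hne, hc₂w₁, hu₁w₂]
  · rw [hE₁, Multiset.filter_add, Multiset.filter_singleton, if_neg (by simp)]
    simp
  · rw [hE₂, Multiset.filter_add, Multiset.filter_comm, hin₁]
    simp [Multiset.filter_singleton, hne.symm, hc₂w₁, hu₁w₂]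
  · rw [hE₂, Multiset.filter_add, Multiset.filter_comm, hout₁]
    simp [Multiset.filter_singleton]
  · rw [hE₂, Multiset.filter_add, Multiset.filter_singleton, if_neg (by simp), Multiset.filter_comm]
    simp

theorem Suppress.diamond_deleteParallel (h₁ : G.Suppress w G₁) (h₂ : G.DeleteParallel G₂) :
    ∃ D, G₁.DeleteParallel D ∧ G₂.Suppress w D := by
  obtain ⟨u, c, hin, hout, hV₁, hE₁⟩ := h₁.exists_filter_eq
  obtain ⟨e, hcount, hV₂, hE₂⟩ := h₂
  -- an arc with a parallel copy is neither the only in-arc nor the only out-arc of `w`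
  have not_of_filter_eq {P : α × α → Prop} [DecidablePred P] {e₀ : α × α}
      (h : G.E.filter P = {e₀}) : ¬ P e := by
    intro hP
    have hcount' := congrArg (Multiset.count e) h
    rw [Multiset.count_filter_of_pos hP, Multiset.count_singleton] at hcount'
    split_ifs at hcount' <;> omega
  have he : e.1 ≠ w ∧ e.2 ≠ w := ⟨not_of_filter_eq hout, not_of_filter_eq hin⟩
  refine ⟨⟨G₁.V, G₁.E.erase e⟩, ⟨e, ?_, rfl, rfl⟩,
    suppress_of_filter_eq (u := u) (c := c) ?_ ?_ (by rw [hV₁, hV₂]) ?_⟩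
  · rw [hE₁, Multiset.count_add, Multiset.count_filter, if_pos he]
    omega
  · rw [hE₂, Multiset.filter_erase, if_neg (not_of_filter_eq hin), hin]
  · rw [hE₂, Multiset.filter_erase, if_neg (not_of_filter_eq hout), hout]
  · have hmem : e ∈ G.E.filter (fun e => e.1 ≠ w ∧ e.2 ≠ w) :=
      Multiset.mem_filter.2 ⟨Multiset.count_pos.1 (by omega), he⟩
    rw [hE₁, hE₂, Multiset.erase_add_left_pos _ hmem, Multiset.filter_erase, if_pos he]

theorem SimpStep.diamond (hR : G.Ranked) (h₁ : SimpStep G G₁) (h₂ : SimpStep G G₂) :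
    G₁ = G₂ ∨ ∃ D, SimpStep G₁ D ∧ SimpStep G₂ D := by
  rcases h₁ with ⟨w₁, h₁⟩ | h₁ <;> rcases h₂ with ⟨w₂, h₂⟩ | h₂
  · by_cases hw : w₁ = w₂
    · subst hw
      exact Or.inl (h₁.eq h₂)
    by_cases h₁₂ : (w₁, w₂) ∈ G.E
    · obtain ⟨D, hD₁, hD₂⟩ := h₁.diamond_of_arc hR h₂ h₁₂
      exact Or.inr ⟨D, Or.inl ⟨w₂, hD₁⟩, Or.inl ⟨w₁, hD₂⟩⟩
    by_cases h₂₁ : (w₂, w₁) ∈ G.E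
    · obtain ⟨D, hD₂, hD₁⟩ := h₂.diamond_of_arc hR h₁ h₂₁
      exact Or.inr ⟨D, Or.inl ⟨w₂, hD₁⟩, Or.inl ⟨w₁, hD₂⟩⟩
    obtain ⟨D, hD₁, hD₂⟩ := h₁.diamond_of_not_adj h₂ hw h₁₂ h₂₁
    exact Or.inr ⟨D, Or.inl ⟨w₂, hD₁⟩, Or.inl ⟨w₁, hD₂⟩⟩
  · obtain ⟨D, hD₁, hD₂⟩ := h₁.diamond_deleteParallel h₂
    exact Or.inr ⟨D, Or.inr hD₁, Or.inl ⟨w₁, hD₂⟩⟩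
  · obtain ⟨D, hD₂, hD₁⟩ := h₂.diamond_deleteParallel h₁
    exact Or.inr ⟨D, Or.inl ⟨w₂, hD₁⟩, Or.inr hD₂⟩
  · obtain ⟨e₁, hc₁, hV₁, hE₁⟩ := h₁
    obtain ⟨e₂, hc₂, hV₂, hE₂⟩ := h₂
    by_cases he : e₁ = e₂
    · subst he
      exact Or.inl (Digraph'.ext (hV₁.trans hV₂.symm) (hE₁.trans hE₂.symm))
    refine Or.inr ⟨⟨G.V, (G.E.erase e₁).erase e₂⟩, Or.inr ⟨e₂, ?_, hV₁.symm, by rw [hE₁]⟩,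
      Or.inr ⟨e₁, ?_, hV₂.symm, by rw [hE₂, Multiset.erase_comm]⟩⟩
    · rwa [hE₁, Multiset.count_erase_of_ne (Ne.symm he)]
    · rwa [hE₂, Multiset.count_erase_of_ne he]

theorem SimpStep.ranked (h : SimpStep G G') (hR : G.Ranked) : G'.Ranked := by
  obtain ⟨f, hf⟩ := hR
  refine ⟨f, fun e he => ?_⟩
  rcases h with ⟨w, hw⟩ | ⟨e', -, -, hE⟩
  · obtain ⟨u, c, hin, hout, -, hE⟩ := hw.exists_filter_eq
    rw [hE, Multiset.mem_add, Multiset.mem_singleton] at he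
    rcases he with he | rfl
    · exact hf e (Multiset.mem_of_mem_filter he)
    · exact (hf _ (Multiset.mem_of_filter_eq_singleton hout)).trans
        (hf _ (Multiset.mem_of_filter_eq_singleton hin))
  · exact hf e (Multiset.mem_of_mem_erase (hE ▸ he))

/-- Restricting to ranked sources lets the diamond property hold for every source, as
`Relation.church_rosser` requires. -/
def RankedSimpStep (G G' : Digraph' α) : Prop := SimpStep G G' ∧ G.Ranked

theorem reflTransGen_rankedSimpStep (hR : G.Ranked) (h : Relation.ReflTransGen SimpStep G H) :
    Relation.ReflTransGen RankedSimpStep G H ∧ H.Ranked := by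
  induction h with
  | refl => exact ⟨.refl, hR⟩
  | tail _ hstep ih => exact ⟨ih.1.tail ⟨hstep, ih.2⟩, hstep.ranked ih.2⟩

theorem FullSimp.unique (hR : G.Ranked) (h₁ : FullSimp G H₁) (h₂ : FullSimp G H₂) : H₁ = H₂ := by
  have local_confluence (G₀ G₁ G₂ : Digraph' α) (h₁ : RankedSimpStep G₀ G₁)
      (h₂ : RankedSimpStep G₀ G₂) :
      ∃ D, Relation.ReflGen RankedSimpStep G₁ D ∧ Relation.ReflTransGen RankedSimpStep G₂ D := by
    rcases h₁.1.diamond h₁.2 h₂.1 with rfl | ⟨D, hD₁, hD₂⟩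
    · exact ⟨G₁, .refl, .refl⟩
    · exact ⟨D, .single ⟨hD₁, h₁.1.ranked h₁.2⟩, .single ⟨hD₂, h₂.1.ranked h₁.2⟩⟩
  have eq_of_normal {H D : Digraph' α} (hH : ∀ G'', ¬ SimpStep H G'')
      (h : Relation.ReflTransGen RankedSimpStep H D) : D = H := by
    rcases h.cases_head with h | ⟨G'', hG'', -⟩
    · exact h.symm
    · exact absurd hG''.1 (hH G'')
  obtain ⟨D, hD₁, hD₂⟩ := Relation.church_rosser local_confluence
    (reflTransGen_rankedSimpStep hR h₁.1).1 (reflTransGen_rankedSimpStep hR h₂.1).1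
  exact (eq_of_normal h₁.2 hD₁).symm.trans (eq_of_normal h₂.2 hD₂)

theorem FullSimp.eq_of_simpStep (hR : G.Ranked) (hstep : SimpStep G G') (h : FullSimp G H)
    (h' : FullSimp G' H') : H = H' :=
  h.unique hR ⟨.head hstep h'.1, h'.2⟩

theorem FullSimp.eq_of_E_eq_zero (h : FullSimp G H) (hE : G.E = 0) : H = G := by
  rcases h.1.cases_head with h | ⟨G', ⟨w, hin, -⟩ | ⟨e, hcount, -⟩, -⟩
  · exact h.symm
  · simp [inDeg, hE] at hin
  · simp [hE] at hcount

end Simplification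

section Degrees

variable {α : Type*} [DecidableEq α] {G : Digraph' α} {u u' v a b y : α}

theorem eq_of_inDeg_eq_one_s14 (h : G.inDeg v = 1) (hu : (u, v) ∈ G.E) (hu' : (u', v) ∈ G.E) :
    u = u' := by
  obtain ⟨e, he⟩ := Multiset.card_eq_one.1 h
  have h₁ : (u, v) ∈ G.E.filter (·.2 = v) := Multiset.mem_filter.2 ⟨hu, rfl⟩
  have h₂ : (u', v) ∈ G.E.filter (·.2 = v) := Multiset.mem_filter.2 ⟨hu', rfl⟩
  rw [he, Multiset.mem_singleton] at h₁ h₂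
  exact congrArg Prod.fst (h₁.trans h₂.symm)

theorem eq_of_outDeg_eq_one_s14 (h : G.outDeg v = 1) (ha : (v, a) ∈ G.E) (hb : (v, b) ∈ G.E) :
    a = b := by
  obtain ⟨e, he⟩ := Multiset.card_eq_one.1 h
  have h₁ : (v, a) ∈ G.E.filter (·.1 = v) := Multiset.mem_filter.2 ⟨ha, rfl⟩
  have h₂ : (v, b) ∈ G.E.filter (·.1 = v) := Multiset.mem_filter.2 ⟨hb, rfl⟩
  rw [he, Multiset.mem_singleton] at h₁ h₂
  exact congrArg Prod.snd (h₁.trans h₂.symm)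

theorem eq_or_eq_of_outDeg_eq_two_s14 (h : G.outDeg v = 2) (ha : (v, a) ∈ G.E) (hb : (v, b) ∈ G.E)
    (hab : a ≠ b) (hy : (v, y) ∈ G.E) : y = a ∨ y = b := by
  obtain ⟨e₁, e₂, he⟩ := Multiset.card_eq_two.1 h
  have mem {z : α} (hz : (v, z) ∈ G.E) : z = e₁.2 ∨ z = e₂.2 := by
    have hz' : (v, z) ∈ G.E.filter (·.1 = v) := Multiset.mem_filter.2 ⟨hz, rfl⟩
    rw [he, Multiset.insert_eq_cons, Multiset.mem_cons, Multiset.mem_singleton] at hz'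
    rcases hz' with rfl | rfl <;> simp
  rcases mem ha with rfl | rfl <;> rcases mem hb with rfl | rfl <;> rcases mem hy with rfl | rfl <;>
    simp_all

end Degrees

section PathGraph

variable {α : Type*} {G G' : Digraph' α} {r v x : α} {A : Finset α} {e : α × α}

theorem mem_pathGraph_V : v ∈ (G.pathGraph r A).V ↔ ∃ x ∈ A, ∃ q, G.PathFrom r x q ∧ v ∈ q := by
  simp only [pathGraph, Finset.mem_filter, and_iff_right_iff_imp]
  rintro ⟨x, -, q, hq, hv⟩
  exact hq.1.mem_V hv

theorem mem_pathGraph_E_s14 :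
    e ∈ (G.pathGraph r A).E ↔ ∃ x ∈ A, ∃ q, G.PathFrom r x q ∧ e ∈ q.zip q.tail := by
  simp only [pathGraph, Multiset.mem_filter, and_iff_right_iff_imp]
  rintro ⟨x, -, q, hq, he⟩
  exact hq.1.arc_mem he

theorem nodup_pathGraph_E (hG : G.E.Nodup) : (G.pathGraph r A).E.Nodup :=
  hG.filter _

theorem Ranked.pathGraph (hG : G.Ranked) : (G.pathGraph r A).Ranked :=
  let ⟨f, hf⟩ := hG
  ⟨f, fun e he => hf e (Multiset.mem_of_mem_filter he)⟩

theorem pathGraph_congr (hG : G.E.Nodup) (hG' : G'.E.Nodup)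
    (h : ∀ x ∈ A, ∀ q, G.PathFrom r x q ↔ G'.PathFrom r x q) :
    G.pathGraph r A = G'.pathGraph r A := by
  ext1
  · ext v
    rw [mem_pathGraph_V, mem_pathGraph_V]
    exact exists_congr fun x => and_congr_right fun hx => exists_congr fun q => by rw [h x hx q]
  · refine ((nodup_pathGraph_E hG).ext (nodup_pathGraph_E hG')).2 fun e => ?_
    rw [mem_pathGraph_E_s14, mem_pathGraph_E_s14]
    exact exists_congr fun x => and_congr_right fun hx => exists_congr fun q => by rw [h x hx q]

theorem pathGraph_empty : G.pathGraph r ∅ = ⟨∅, 0⟩ := by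
  ext1 <;> simp [pathGraph]

theorem pathGraph_singleton_of_sink (hx : x ∈ G.V) (hsink : ∀ y, (x, y) ∉ G.E) :
    G.pathGraph x {x} = ⟨{x}, 0⟩ := by
  have hpath {q : List α} : G.PathFrom x x q ↔ q = [x] :=
    ⟨fun hq => hq.eq_singleton_of_sink hsink,
      fun hq => hq ▸ ⟨isPath_singleton hx, rfl, rfl⟩⟩
  ext1
  · ext v
    simp [mem_pathGraph_V, hpath, eq_comm]
  · refine Multiset.eq_zero_of_forall_notMem fun e he => ?_
    simp [mem_pathGraph_E_s14, hpath] at he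

end PathGraph

end Digraph'

namespace PhyloNet

variable {α : Type*} (N : PhyloNet α) {x u u' v a b y : α}

theorem E_nodup : N.G.E.Nodup :=
  Multiset.nodup_iff_count_le_one.2 N.noParallel

theorem ranked : N.G.Ranked :=
  N.acyclic.ranked N.wf

theorem mem_V_of_mem_X (hx : x ∈ N.X) : x ∈ N.G.V := by
  rcases N.binary with ⟨hV, -, hX⟩ | ⟨-, -, hleaf, -, -⟩
  · simpa [hV, hX] using hx
  · exact (hleaf x hx).1

theorem not_arc_of_mem_X (hx : x ∈ N.X) : (x, y) ∉ N.G.E := by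
  rcases N.binary with ⟨-, hE, -⟩ | ⟨-, -, hleaf, -, -⟩
  · simp [hE]
  · intro hxy
    have h : (x, y) ∈ N.G.E.filter (·.1 = x) := Multiset.mem_filter.2 ⟨hxy, rfl⟩
    rw [Multiset.card_eq_zero.1 (hleaf x hx).2.2] at h
    exact Multiset.notMem_zero _ h

theorem eq_of_arc_of_mem_X (hx : x ∈ N.X) (hu : (u, x) ∈ N.G.E) (hu' : (u', x) ∈ N.G.E) :
    u = u' := by
  rcases N.binary with ⟨-, hE, -⟩ | ⟨-, -, hleaf, -, -⟩
  · simp [hE] at hu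
  · exact Digraph'.eq_of_inDeg_eq_one_s14 (hleaf x hx).2.1 hu hu'

theorem eq_or_eq_of_arc_root (ha : (N.root, a) ∈ N.G.E) (hb : (N.root, b) ∈ N.G.E) (hab : a ≠ b)
    (hy : (N.root, y) ∈ N.G.E) : y = a ∨ y = b := by
  rcases N.binary with ⟨-, hE, -⟩ | ⟨-, hroot, -⟩
  · simp [hE] at ha
  · exact Digraph'.eq_or_eq_of_outDeg_eq_two_s14 hroot ha hb hab hy

theorem tree_vertex_of_two_children (hv : v ≠ N.root) (ha : (v, a) ∈ N.G.E)
    (hb : (v, b) ∈ N.G.E) (hab : a ≠ b) :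
    (∀ u u', (u, v) ∈ N.G.E → (u', v) ∈ N.G.E → u = u') ∧
      ∀ y, (v, y) ∈ N.G.E → y = a ∨ y = b := by
  rcases N.binary with ⟨-, hE, -⟩ | ⟨-, -, -, -, hint⟩
  · simp [hE] at ha
  rcases hint v (N.wf _ ha).1 hv (fun hvX => N.not_arc_of_mem_X hvX ha) with h | ⟨-, h⟩
  · exact ⟨fun u u' => Digraph'.eq_of_inDeg_eq_one_s14 h.1,
      fun y => Digraph'.eq_or_eq_of_outDeg_eq_two_s14 h.2 ha hb hab⟩
  · exact absurd (Digraph'.eq_of_outDeg_eq_one_s14 h ha hb) hab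

end PhyloNet

/-- A cherry `{a, b}` of `N` whose parent `p` is not the root, with `g` the parent of `p`, and
`N'` obtained from `N` by deleting `b` and suppressing `p`. -/
structure CherryReduction {α : Type*} (N N' : PhyloNet α) (a b p g : α) : Prop where
  ne : a ≠ b
  arc_pa : (p, a) ∈ N.G.E
  arc_gp : (g, p) ∈ N.G.E
  sink_a : ∀ y, (a, y) ∉ N.G.E
  sink_b : ∀ y, (b, y) ∉ N.G.E
  parent_a : ∀ u, (u, a) ∈ N.G.E → u = p
  parent_p : ∀ u, (u, p) ∈ N.G.E → u = g
  child_p : ∀ y, (p, y) ∈ N.G.E → y = a ∨ y = b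
  root_eq : N'.root = N.root
  mem_V : ∀ v, v ∈ N'.G.V ↔ v ∈ N.G.V ∧ v ≠ b ∧ v ≠ p
  mem_E : ∀ e, e ∈ N'.G.E ↔ (e ∈ N.G.E ∧ e.1 ≠ b ∧ e.2 ≠ b ∧ e.1 ≠ p ∧ e.2 ≠ p) ∨ e = (g, a)

namespace CherryReduction

open Digraph'

variable {α : Type*} {N N' : PhyloNet α} {a b p g u v x : α} {q q₀ : List α}

theorem p_ne_a (hc : CherryReduction N N' a b p g) : p ≠ a := by
  rintro rfl
  exact hc.sink_a _ hc.arc_pa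

theorem g_ne_p (hc : CherryReduction N N' a b p g) : g ≠ p := by
  rintro rfl
  rcases hc.child_p g hc.arc_gp with rfl | rfl
  exacts [hc.sink_a _ hc.arc_gp, hc.sink_b _ hc.arc_gp]

theorem arc_ga_notMem (hc : CherryReduction N N' a b p g) : (g, a) ∉ N.G.E :=
  fun h => hc.g_ne_p (hc.parent_a g h)

theorem arc_ga' (hc : CherryReduction N N' a b p g) : (g, a) ∈ N'.G.E :=
  (hc.mem_E _).2 (Or.inr rfl)

theorem sink_a' (hc : CherryReduction N N' a b p g) (y : α) : (a, y) ∉ N'.G.E := by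
  rintro h
  rcases (hc.mem_E _).1 h with h | h
  · exact hc.sink_a y h.1
  · cases h
    exact hc.sink_a _ hc.arc_gp

theorem parent_a' (hc : CherryReduction N N' a b p g) (hu : (u, a) ∈ N'.G.E) : u = g := by
  rcases (hc.mem_E _).1 hu with h | h
  · exact absurd (hc.parent_a u h.1) h.2.2.2.1
  · exact congrArg Prod.fst h

theorem isPath_iff_of_notMem (hc : CherryReduction N N' a b p g) (ha : a ∉ q) (hb : b ∉ q)
    (hp : p ∉ q) : N.G.IsPath q ↔ N'.G.IsPath q := by
  have hne {v : α} (hv : v ∈ q) : v ≠ a ∧ v ≠ b ∧ v ≠ p :=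
    ⟨ne_of_mem_of_not_mem hv ha, ne_of_mem_of_not_mem hv hb, ne_of_mem_of_not_mem hv hp⟩
  rw [isPath_iff, isPath_iff]
  refine Iff.rfl.and (and_congr (forall₂_congr fun v hv => ?_) (forall₂_congr fun e he => ?_))
  · simp [hc.mem_V, hne hv]
  · obtain ⟨h₁, h₂⟩ := List.mem_of_mem_zip_tail he
    simp [hc.mem_E, Prod.ext_iff, hne h₁, hne h₂]

theorem notMem_of_pathFrom (hc : CherryReduction N N' a b p g) (hq : N.G.PathFrom u x q)
    (hxa : x ≠ a) (hxb : x ≠ b) (hxp : x ≠ p) : a ∉ q ∧ b ∉ q ∧ p ∉ q := by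
  have sink_ne {y : α} (hy : ∀ z, (y, z) ∉ N.G.E) (hxy : x ≠ y) : y ∉ q := fun h =>
    hxy (hq.eq_of_sink h hy).symm
  refine ⟨sink_ne hc.sink_a hxa, sink_ne hc.sink_b hxb, fun hp => ?_⟩
  -- the successor of `p` on the path would be one of the sinks `a`, `b`
  obtain ⟨y, hy, hpy⟩ := hq.1.exists_arc_of_mem hp (by rw [hq.2.2]; simpa using hxp)
  rcases hc.child_p y hpy with rfl | rfl
  exacts [sink_ne hc.sink_a hxa hy, sink_ne hc.sink_b hxb hy]

theorem pathFrom_iff_of_ne (hc : CherryReduction N N' a b p g) (hxa : x ≠ a) (hxb : x ≠ b)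
    (hxp : x ≠ p) : N.G.PathFrom u x q ↔ N'.G.PathFrom u x q := by
  refine ⟨fun hq => ?_, fun hq => ?_⟩
  · obtain ⟨ha, hb, hp⟩ := hc.notMem_of_pathFrom hq hxa hxb hxp
    exact ⟨(hc.isPath_iff_of_notMem ha hb hp).1 hq.1, hq.2⟩
  · have ha : a ∉ q := fun h => hxa (hq.eq_of_sink h hc.sink_a').symm
    have hb : b ∉ q := fun h => ((hc.mem_V b).1 (hq.1.mem_V h)).2.1 rfl
    have hp : p ∉ q := fun h => ((hc.mem_V p).1 (hq.1.mem_V h)).2.2 rfl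
    exact ⟨(hc.isPath_iff_of_notMem ha hb hp).2 hq.1, hq.2⟩

theorem eq_append_of_pathFrom (hc : CherryReduction N N' a b p g) (hq : N.G.PathFrom u a q)
    (hua : u ≠ a) (hup : u ≠ p) : ∃ q₀, q = q₀ ++ [g, p, a] := by
  obtain ⟨q₁, hq₁, rfl⟩ := hq.exists_eq_append hua
  obtain ⟨q₂, l, rfl⟩ := (List.eq_nil_or_concat' q₁).resolve_left hq₁
  obtain rfl := hc.parent_a l
    (show N.G.IsPath (q₂ ++ l :: a :: []) by simpa using hq.1).arc_mem_of_eq_append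
  obtain ⟨q₀, l', rfl⟩ := (List.eq_nil_or_concat' q₂).resolve_left <| by
    rintro rfl
    exact hup (by simpa using hq.2.1.symm)
  obtain rfl := hc.parent_p l'
    (show N.G.IsPath (q₀ ++ l' :: l :: [a]) by simpa using hq.1).arc_mem_of_eq_append
  exact ⟨q₀, by simp⟩

theorem eq_append_of_pathFrom' (hc : CherryReduction N N' a b p g) (hq : N'.G.PathFrom u a q)
    (hua : u ≠ a) : ∃ q₀, q = q₀ ++ [g, a] := by
  obtain ⟨q₁, hq₁, rfl⟩ := hq.exists_eq_append hua
  obtain ⟨q₀, l, rfl⟩ := (List.eq_nil_or_concat' q₁).resolve_left hq₁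
  obtain rfl := hc.parent_a'
    (show N'.G.IsPath (q₀ ++ l :: a :: []) by simpa using hq.1).arc_mem_of_eq_append
  exact ⟨q₀, by simp⟩

theorem pathFrom_append_iff (hc : CherryReduction N N' a b p g) :
    N.G.PathFrom u a (q₀ ++ [g, p, a]) ↔ N'.G.PathFrom u a (q₀ ++ [g, a]) := by
  have hhead : (q₀ ++ [g, p, a]).head? = (q₀ ++ [g, a]).head? := by cases q₀ <;> rfl
  rw [PathFrom, PathFrom, hhead, show (q₀ ++ [g, p, a]).getLast? = some a by simp,
    show (q₀ ++ [g, a]).getLast? = some a by simp,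
    show q₀ ++ [g, p, a] = q₀ ++ [g] ++ [p, a] by simp,
    show q₀ ++ [g, a] = q₀ ++ [g] ++ [a] by simp]
  refine and_congr_left fun _ => ⟨fun hq => ?_, fun hq => ?_⟩
  · have hnd := List.nodup_append.1 (hq.nodup N.acyclic)
    have ha : a ∉ q₀ ++ [g] := fun h => hnd.2.2 a h a (by simp) rfl
    have hp : p ∉ q₀ ++ [g] := fun h => hnd.2.2 p h p (by simp) rfl
    have hb : b ∉ q₀ ++ [g] := fun h => by
      have hlast := hq.getLast?_eq_of_sink (List.mem_append_left _ h) hc.sink_b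
      exact hc.ne (by simpa using hlast)
    have haV : a ∈ N.G.V := hq.mem_V (by simp)
    refine ((hc.isPath_iff_of_notMem ha hb hp).1 (hq.of_append_left (by simp))).append
      (isPath_singleton ((hc.mem_V a).2 ⟨haV, hc.ne, hc.p_ne_a.symm⟩)) ?_
    simpa using hc.arc_ga'
  · have hnd := List.nodup_append.1 (hq.nodup N'.acyclic)
    have ha : a ∉ q₀ ++ [g] := fun h => hnd.2.2 a h a (by simp) rfl
    have notMem {v : α} (hv : ¬ v ∈ N'.G.V) : v ∉ q₀ ++ [g] := fun h =>
      hv (hq.mem_V (List.mem_append_left _ h))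
    have hb := notMem fun h => ((hc.mem_V b).1 h).2.1 rfl
    have hp := notMem fun h => ((hc.mem_V p).1 h).2.2 rfl
    refine ((hc.isPath_iff_of_notMem ha hb hp).2 (hq.of_append_left (by simp))).append
      (isPath_pair hc.arc_pa (N.wf _ hc.arc_pa).1 (N.wf _ hc.arc_pa).2) ?_
    simpa using hc.arc_gp

theorem notMem_of_isPath' (hc : CherryReduction N N' a b p g) (hq : N'.G.IsPath q) :
    b ∉ q ∧ p ∉ q :=
  ⟨fun h => ((hc.mem_V b).1 (hq.mem_V h)).2.1 rfl, fun h => ((hc.mem_V p).1 (hq.mem_V h)).2.2 rfl⟩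

theorem pathFrom_iff_exists_erase (hc : CherryReduction N N' a b p g) (hxb : x ≠ b) (hxp : x ≠ p)
    (hua : u ≠ a) (hup : u ≠ p) :
    N'.G.PathFrom u x q ↔ ∃ q', N.G.PathFrom u x q' ∧ q = q'.erase p := by
  have erase_eq {q₀ : List α} (hp : p ∉ q₀) : (q₀ ++ [g, p, a]).erase p = q₀ ++ [g, a] := by
    rw [List.erase_append_right _ hp]
    simp [hc.g_ne_p]
  by_cases hxa : x = a
  · subst hxa
    refine ⟨fun hq => ?_, fun ⟨q', hq', hq⟩ => ?_⟩
    · obtain ⟨q₀, rfl⟩ := hc.eq_append_of_pathFrom' hq hua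
      have hp : p ∉ q₀ := fun h => (hc.notMem_of_isPath' hq.1).2 (by simp [h])
      exact ⟨_, hc.pathFrom_append_iff.2 hq, (erase_eq hp).symm⟩
    · obtain ⟨q₀, rfl⟩ := hc.eq_append_of_pathFrom hq' hua hup
      have hp : p ∉ q₀ := fun h => (List.nodup_append.1 (hq'.1.nodup N.acyclic)).2.2 p h p
        (by simp) rfl
      rw [hq, erase_eq hp]
      exact hc.pathFrom_append_iff.1 hq'
  · refine ⟨fun hq => ⟨q, (hc.pathFrom_iff_of_ne hxa hxb hxp).2 hq,
      (List.erase_of_not_mem (hc.notMem_of_isPath' hq.1).2).symm⟩, fun ⟨q', hq', hq⟩ => ?_⟩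
    rw [hq, List.erase_of_not_mem (hc.notMem_of_pathFrom hq' hxa hxb hxp).2.2]
    exact (hc.pathFrom_iff_of_ne hxa hxb hxp).1 hq'

theorem mem_zip_erase_iff (hc : CherryReduction N N' a b p g) (hq : N.G.PathFrom u x q)
    (hxb : x ≠ b) (hxp : x ≠ p) (hua : u ≠ a) (hup : u ≠ p) {e : α × α} :
    e ∈ (q.erase p).zip (q.erase p).tail ↔
      (e ∈ q.zip q.tail ∧ e.1 ≠ p ∧ e.2 ≠ p) ∨ (x = a ∧ e = (g, a)) := by
  by_cases hxa : x = a
  · subst hxa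
    obtain ⟨q₀, rfl⟩ := hc.eq_append_of_pathFrom hq hua hup
    have hnd := List.nodup_append.1 (hq.1.nodup N.acyclic)
    have hp : p ∉ q₀ := fun h => hnd.2.2 p h p (by simp) rfl
    have hq₀ {e : α × α} (he : e ∈ q₀.zip q₀.tail) : e.1 ≠ p ∧ e.2 ≠ p :=
      ⟨ne_of_mem_of_not_mem (List.mem_of_mem_zip_tail he).1 hp,
        ne_of_mem_of_not_mem (List.mem_of_mem_zip_tail he).2 hp⟩
    have hlast {v : α} (hv : q₀.getLast? = some v) : v ≠ p :=
      ne_of_mem_of_not_mem (List.mem_of_getLast? hv) hp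
    rw [List.erase_append_right _ hp, List.mem_zip_tail_append, List.mem_zip_tail_append]
    simp only [List.erase_cons_tail (show ¬ (g == p) by simpa using hc.g_ne_p),
      List.erase_cons_head, List.tail_cons, List.zip_cons_cons, List.zip_nil_right, List.mem_cons,
      List.not_mem_nil, List.head?_cons, Option.some.injEq, true_and, or_false]
    constructor
    · rintro (he | he | ⟨hv, rfl⟩)
      exacts [Or.inl ⟨Or.inl he, hq₀ he⟩, Or.inr he, Or.inl ⟨Or.inr (Or.inr ⟨hv, rfl⟩), hlast hv,
        hc.g_ne_p⟩]
    · rintro (⟨he | he | ⟨hv, rfl⟩, h₁, h₂⟩ | he)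
      · exact Or.inl he
      · rcases he with rfl | rfl
        exacts [absurd rfl h₂, absurd rfl h₁]
      · exact Or.inr (Or.inr ⟨hv, rfl⟩)
      · exact Or.inr (Or.inl he)
  · have hp := (hc.notMem_of_pathFrom hq hxa hxb hxp).2.2
    rw [List.erase_of_not_mem hp]
    simp only [hxa, false_and, or_false, iff_self_and]
    exact fun he => ⟨ne_of_mem_of_not_mem (List.mem_of_mem_zip_tail he).1 hp,
      ne_of_mem_of_not_mem (List.mem_of_mem_zip_tail he).2 hp⟩

theorem reaches_of_reaches' (hc : CherryReduction N N' a b p g) (hua : u ≠ a)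
    (h : N'.G.Reaches u v) : N.G.Reaches u v := by
  obtain ⟨q, hq⟩ := h
  by_cases ha : a ∈ q
  · obtain rfl : a = v := hq.eq_of_sink ha hc.sink_a'
    obtain ⟨q₀, rfl⟩ := hc.eq_append_of_pathFrom' hq hua
    exact ⟨_, hc.pathFrom_append_iff.2 hq⟩
  · obtain ⟨hb, hp⟩ := hc.notMem_of_isPath' hq.1
    exact ⟨q, (hc.isPath_iff_of_notMem ha hb hp).2 hq.1, hq.2⟩

theorem isLowestSA {A : Finset α} {r x₀ : α} (hc : CherryReduction N N' a b p g)
    (hA : ∀ x ∈ A, x ≠ b ∧ x ≠ p) (hx₀ : x₀ ∈ A) (hx₀a : x₀ ≠ a) (hx₀V : x₀ ∈ N.G.V)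
    (hr : N.G.IsLowestSA N.root A r) : N'.G.IsLowestSA N'.root A r ∧ r ≠ a ∧ r ≠ p := by
  obtain ⟨q, hq⟩ := N.reach x₀ hx₀V
  obtain ⟨ha, -, hp⟩ := hc.notMem_of_pathFrom hq hx₀a (hA x₀ hx₀).1 (hA x₀ hx₀).2
  have hroot : N.root ∈ q := List.mem_of_head? hq.2.1
  have hrq : r ∈ q := hr.1 x₀ hx₀ q hq
  have hra := ne_of_mem_of_not_mem hrq ha
  have hrp := ne_of_mem_of_not_mem hrq hp
  have hpaths {x : α} (hx : x ∈ A) {q : List α} := hc.pathFrom_iff_exists_erase (q := q)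
    (hA x hx).1 (hA x hx).2 (ne_of_mem_of_not_mem hroot ha) (ne_of_mem_of_not_mem hroot hp)
  rw [hc.root_eq]
  refine ⟨⟨fun x hx q' hq' => ?_, fun v hv hvr hrv => ?_⟩, hra, hrp⟩
  · obtain ⟨q, hq, rfl⟩ := (hpaths hx).1 hq'
    exact (List.mem_erase_of_ne hrp).2 (hr.1 x hx q hq)
  · refine hr.2 v (fun x hx q hq => ?_) hvr (hc.reaches_of_reaches' hra hrv)
    exact List.mem_of_mem_erase (hv x hx _ ((hpaths hx).2 ⟨q, hq, rfl⟩))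

section PathGraph

variable {A : Finset α} {r : α} {e : α × α}

theorem pathGraph_eq (hc : CherryReduction N N' a b p g) (hA : ∀ x ∈ A, x ≠ b ∧ x ≠ p)
    (haA : a ∉ A) : N.G.pathGraph r A = N'.G.pathGraph r A :=
  pathGraph_congr N.E_nodup N'.E_nodup fun x hx _ =>
    hc.pathFrom_iff_of_ne (ne_of_mem_of_not_mem hx haA) (hA x hx).1 (hA x hx).2

theorem mem_pathGraph_V_iff (hc : CherryReduction N N' a b p g) (hA : ∀ x ∈ A, x ≠ b ∧ x ≠ p)
    (hra : r ≠ a) (hrp : r ≠ p) :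
    v ∈ (N'.G.pathGraph r A).V ↔ v ∈ (N.G.pathGraph r A).V ∧ v ≠ p := by
  simp only [mem_pathGraph_V]
  constructor
  · rintro ⟨x, hx, q', hq', hv⟩
    obtain ⟨q, hq, rfl⟩ := (hc.pathFrom_iff_exists_erase (hA x hx).1 (hA x hx).2 hra hrp).1 hq'
    obtain ⟨hvp, hv⟩ := ((hq.1.nodup N.acyclic).mem_erase_iff).1 hv
    exact ⟨⟨x, hx, q, hq, hv⟩, hvp⟩
  · rintro ⟨⟨x, hx, q, hq, hv⟩, hvp⟩
    exact ⟨x, hx, _, (hc.pathFrom_iff_exists_erase (hA x hx).1 (hA x hx).2 hra hrp).2 ⟨q, hq, rfl⟩,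
      (List.mem_erase_of_ne hvp).2 hv⟩

theorem mem_pathGraph_E_iff (hc : CherryReduction N N' a b p g) (hA : ∀ x ∈ A, x ≠ b ∧ x ≠ p)
    (hra : r ≠ a) (hrp : r ≠ p) (haA : a ∈ A) (hreach : N.G.Reaches r a) :
    e ∈ (N'.G.pathGraph r A).E ↔ (e ∈ (N.G.pathGraph r A).E ∧ e.1 ≠ p ∧ e.2 ≠ p) ∨ e = (g, a) := by
  simp only [mem_pathGraph_E_s14]
  have hpaths {x : α} (hx : x ∈ A) {q : List α} :=
    hc.pathFrom_iff_exists_erase (q := q) (hA x hx).1 (hA x hx).2 hra hrp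
  constructor
  · rintro ⟨x, hx, q', hq', he⟩
    obtain ⟨q, hq, rfl⟩ := (hpaths hx).1 hq'
    rcases (hc.mem_zip_erase_iff hq (hA x hx).1 (hA x hx).2 hra hrp).1 he with he | ⟨-, rfl⟩
    exacts [Or.inl ⟨⟨x, hx, q, hq, he.1⟩, he.2⟩, Or.inr rfl]
  · rintro (⟨⟨x, hx, q, hq, he⟩, hep⟩ | rfl)
    · exact ⟨x, hx, _, (hpaths hx).2 ⟨q, hq, rfl⟩,
        (hc.mem_zip_erase_iff hq (hA x hx).1 (hA x hx).2 hra hrp).2 (Or.inl ⟨he, hep⟩)⟩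
    · obtain ⟨q, hq⟩ := hreach
      exact ⟨a, haA, _, (hpaths haA).2 ⟨q, hq, rfl⟩,
        (hc.mem_zip_erase_iff hq hc.ne hc.p_ne_a.symm hra hrp).2 (Or.inr ⟨rfl, rfl⟩)⟩

theorem filter_pathGraph_snd_eq [DecidableEq α] (hc : CherryReduction N N' a b p g) (hra : r ≠ a)
    (hrp : r ≠ p) (haA : a ∈ A) (hreach : N.G.Reaches r a) :
    (N.G.pathGraph r A).E.filter (·.2 = p) = {(g, p)} := by
  obtain ⟨q, hq⟩ := hreach
  obtain ⟨q₀, rfl⟩ := hc.eq_append_of_pathFrom hq hra hrp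
  refine ((nodup_pathGraph_E N.E_nodup).filter _ |>.ext (Multiset.nodup_singleton _)).2 fun e => ?_
  rw [Multiset.mem_filter, mem_pathGraph_E_s14, Multiset.mem_singleton]
  constructor
  · rintro ⟨⟨x, -, q', hq', he⟩, hep⟩
    have harc : (e.1, p) ∈ N.G.E := hep ▸ hq'.1.arc_mem he
    exact Prod.ext (hc.parent_p _ harc) hep
  · rintro rfl
    refine ⟨⟨a, haA, _, hq, List.mem_zip_tail_append.2 (Or.inr (Or.inl (by simp)))⟩, rfl⟩

theorem filter_pathGraph_fst_eq [DecidableEq α] (hc : CherryReduction N N' a b p g)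
    (hA : ∀ x ∈ A, x ≠ b ∧ x ≠ p) (hra : r ≠ a) (hrp : r ≠ p) (haA : a ∈ A)
    (hreach : N.G.Reaches r a) : (N.G.pathGraph r A).E.filter (·.1 = p) = {(p, a)} := by
  obtain ⟨q, hq⟩ := hreach
  obtain ⟨q₀, rfl⟩ := hc.eq_append_of_pathFrom hq hra hrp
  refine ((nodup_pathGraph_E N.E_nodup).filter _ |>.ext (Multiset.nodup_singleton _)).2 fun e => ?_
  rw [Multiset.mem_filter, mem_pathGraph_E_s14, Multiset.mem_singleton]
  constructor
  · rintro ⟨⟨x, hx, q', hq', he⟩, hep⟩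
    have harc : (p, e.2) ∈ N.G.E := hep ▸ hq'.1.arc_mem he
    refine Prod.ext hep ((hc.child_p _ harc).resolve_right fun h => (hA x hx).1 ?_)
    have hbq : b ∈ q' := h ▸ (List.mem_of_mem_zip_tail he).2
    exact (hq'.eq_of_sink hbq hc.sink_b).symm
  · rintro rfl
    refine ⟨⟨a, haA, _, hq, List.mem_zip_tail_append.2 (Or.inr (Or.inl (by simp)))⟩, rfl⟩

theorem suppress_pathGraph [DecidableEq α] (hc : CherryReduction N N' a b p g)
    (hA : ∀ x ∈ A, x ≠ b ∧ x ≠ p) (hra : r ≠ a) (hrp : r ≠ p) (haA : a ∈ A)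
    (hreach : N.G.Reaches r a) : (N.G.pathGraph r A).Suppress p (N'.G.pathGraph r A) := by
  refine suppress_of_filter_eq (hc.filter_pathGraph_snd_eq hra hrp haA hreach)
    (hc.filter_pathGraph_fst_eq hA hra hrp haA hreach) ?_ ?_
  · ext v
    rw [hc.mem_pathGraph_V_iff hA hra hrp, Finset.mem_erase, and_comm]
  · have hga : (g, a) ∉ (N.G.pathGraph r A).E := fun h =>
      hc.arc_ga_notMem (Multiset.mem_of_mem_filter h)
    refine ((nodup_pathGraph_E N'.E_nodup).ext (Multiset.nodup_add.2
      ⟨(nodup_pathGraph_E N.E_nodup).filter _, Multiset.nodup_singleton _, ?_⟩)).2 fun e => ?_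
    · exact Multiset.disjoint_singleton.2 fun h => hga (Multiset.mem_of_mem_filter h)
    · rw [hc.mem_pathGraph_E_iff hA hra hrp haA hreach, Multiset.mem_add, Multiset.mem_filter,
        Multiset.mem_singleton]

end PathGraph

theorem eq_of_exhibits [DecidableEq α] {x₀ : α} {A : Finset α} {H H' : Digraph' α}
    (hc : CherryReduction N N' a b p g)
    (hA : ∀ x ∈ A, x ∈ N.X ∧ x ≠ b) (hx₀ : x₀ ∈ A) (hx₀a : x₀ ≠ a) (h : N.Exhibits A H)
    (h' : N'.Exhibits A H') : H = H' := by
  obtain ⟨r, hr, hfs⟩ := h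
  obtain ⟨r', hr', hfs'⟩ := h'
  have hAbp : ∀ x ∈ A, x ≠ b ∧ x ≠ p := fun x hx =>
    ⟨(hA x hx).2, by rintro rfl; exact N.not_arc_of_mem_X (hA x hx).1 hc.arc_pa⟩
  have hx₀V := N.mem_V_of_mem_X (hA x₀ hx₀).1
  obtain ⟨hrN', hra, hrp⟩ := hc.isLowestSA hAbp hx₀ hx₀a hx₀V hr
  obtain rfl : r = r' :=
    (hr'.eq hx₀ (N'.reach x₀ ((hc.mem_V x₀).2 ⟨hx₀V, hAbp x₀ hx₀⟩)) hrN').symm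
  by_cases haA : a ∈ A
  · have hreach : N.G.Reaches r a := by
      obtain ⟨q, hq⟩ := N.reach a (N.mem_V_of_mem_X (hA a haA).1)
      exact hq.1.mem_reaches hq.2.2 (hr.1 a haA q hq)
    exact hfs.eq_of_simpStep N.ranked.pathGraph
      (Or.inl ⟨p, hc.suppress_pathGraph hAbp hra hrp haA hreach⟩) hfs'
  · rw [hc.pathGraph_eq hAbp haA] at hfs
    exact hfs.unique N'.ranked.pathGraph hfs'

end CherryReduction

namespace PhyloNet

variable {α : Type*} [DecidableEq α] {N N' : PhyloNet α} {a b x : α} {H : Digraph' α}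

theorem eq_of_exhibits_empty (h : N.Exhibits ∅ H) : H = ⟨∅, 0⟩ := by
  obtain ⟨r, -, hfs⟩ := h
  rw [Digraph'.pathGraph_empty] at hfs
  exact hfs.eq_of_E_eq_zero rfl

theorem eq_of_exhibits_singleton (hx : x ∈ N.X) (h : N.Exhibits {x} H) : H = ⟨{x}, 0⟩ := by
  obtain ⟨r, hr, hfs⟩ := h
  obtain rfl := hr.eq_of_singleton (N.reach x (N.mem_V_of_mem_X hx))
  rw [Digraph'.pathGraph_singleton_of_sink (N.mem_V_of_mem_X hx) fun y => N.not_arc_of_mem_X hx]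
    at hfs
  exact hfs.eq_of_E_eq_zero rfl

theorem ReduceCherry.exists_cherryReduction {x₀ : α} (h : N.ReduceCherry a b N')
    (hx₀ : x₀ ∈ N.X.erase b) (hx₀a : x₀ ≠ a) : ∃ p g, CherryReduction N N' a b p g := by
  obtain ⟨⟨haX, hbX, hab, -⟩, -, p, hpa, hpb, hcase⟩ := h
  obtain ⟨hx₀b, hx₀X⟩ := Finset.mem_erase.1 hx₀
  rcases hcase with ⟨rfl, -⟩ | ⟨hpr, hroot, hsupp⟩
  · -- the root would be the parent of every leaf
    exfalso
    obtain ⟨q, hq⟩ := N.reach x₀ (N.mem_V_of_mem_X hx₀X)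
    obtain ⟨y, hy, hry⟩ := hq.1.exists_arc_of_mem (List.mem_of_head? hq.2.1) (by
      rw [hq.2.2]
      rintro ⟨⟩
      exact N.not_arc_of_mem_X hx₀X hpa)
    have hyx₀ := hq.eq_of_sink hy fun z => by
      rcases N.eq_or_eq_of_arc_root hpa hpb hab hry with rfl | rfl
      exacts [N.not_arc_of_mem_X haX, N.not_arc_of_mem_X hbX]
    rcases N.eq_or_eq_of_arc_root hpa hpb hab hry with rfl | rfl
    exacts [hx₀a hyx₀.symm, hx₀b hyx₀.symm]
  obtain ⟨hparent, hchild⟩ := N.tree_vertex_of_two_children hpr hpa hpb hab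
  obtain ⟨g, c, hin, hout, hV, hE⟩ := hsupp.exists_filter_eq
  have hgp := Multiset.mem_of_mem_filter (Multiset.mem_of_filter_eq_singleton hin)
  have hpc := Multiset.mem_filter.1 (Multiset.mem_of_filter_eq_singleton hout)
  obtain rfl : c = a := (hchild c hpc.1).resolve_right hpc.2.2
  refine ⟨p, g, hab, hpa, hgp, fun y => N.not_arc_of_mem_X haX, fun y => N.not_arc_of_mem_X hbX,
    fun u hu => N.eq_of_arc_of_mem_X haX hu hpa, fun u hu => hparent u g hu hgp, hchild, hroot,
    fun v => ?_, fun e => ?_⟩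
  · simp only [hV, Digraph'.deleteVertex, Finset.mem_erase]
    tauto
  · simp [hE, Digraph'.deleteVertex, and_comm, and_left_comm, and_assoc]

end PhyloNet

/-- if `N'` is obtained from `N` by reducing the leaf `b` of
a cherry `{a, b}`, then for every `A ⊆ X − {b}` the networks exhibited by
`N` and `N'` on `A` are isomorphic. -/
theorem exhibited_iso_of_reduceCherry
    {α : Type*} [DecidableEq α] (N N' : PhyloNet α) (a b : α)
    (h : N.ReduceCherry a b N')
    (A : Finset α) (hA : A ⊆ N.X.erase b)
    (HA HA' : Digraph' α)
    (h1 : N.Exhibits A HA) (h2 : N'.Exhibits A HA') :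
    Digraph'.IsoOn HA HA' A := by
  suffices HA = HA' from this ▸ Digraph'.IsoOn.refl HA A
  obtain ⟨haX, -, hab, -⟩ := h.1
  rcases A.eq_empty_or_nonempty with rfl | hAne
  · rw [PhyloNet.eq_of_exhibits_empty h1, PhyloNet.eq_of_exhibits_empty h2]
  by_cases hAa : ∀ x ∈ A, x = a
  · obtain rfl : A = {a} := Finset.eq_singleton_iff_unique_mem.2
      ⟨hAne.elim fun x hx => hAa x hx ▸ hx, hAa⟩
    have haX' : a ∈ N'.X := h.2.1 ▸ Finset.mem_erase.2 ⟨hab, haX⟩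
    rw [PhyloNet.eq_of_exhibits_singleton haX h1, PhyloNet.eq_of_exhibits_singleton haX' h2]
  obtain ⟨x₀, hx₀, hx₀a⟩ := not_forall₂.1 hAa
  obtain ⟨p, g, hc⟩ := h.exists_cherryReduction (hA hx₀) hx₀a
  exact hc.eq_of_exhibits (fun x hx => (Finset.mem_erase.1 (hA hx)).symm) hx₀ hx₀a h1 h2
end
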